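/- arXiv:2005.07221 — 6 statements merged into one kernel-verified Lean document; each statement's English description precedes it below -/
import Mathlib

section
/- Let X be a real Banach space with a semi-normalized Markushevich basis (e_i, e*_i), let t ∈ (0,1], and let n = (n_k) be a strictly increasing sequence of positive integers. Suppose the basis is 1-n-t-suppression-quasi-greedy, i.e. ‖x − P_A(x)‖ ≤ ‖x‖ for every x ∈ X and every t-greedy set A for x with |A| ∈ {n_k : k ∈ ℕ}. Then, with M := n_1·α_1·α_2, the basis is (M+1)-suppression-quasi-greedy: ‖x − P_A(x)‖ ≤ (M+1)·‖x‖ for every x ∈ X and every greedy set A for x (of any finite cardinality). In particular, the basis is quasi-greedy. -/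
open Finset

/-- Coordinate projection `P_A x = ∑_{i ∈ A} e*_i(x) • e_i`. -/
noncomputable def proj {X : Type*} [NormedAddCommGroup X] [NormedSpace ℝ X]
    (e : ℕ → X) (f : ℕ → X →L[ℝ] ℝ) (A : Finset ℕ) (x : X) : X :=
  ∑ i ∈ A, f i x • e i

/-- `A` is a `t`-greedy set for `x`:
`min_{i ∈ A} |e*_i(x)| ≥ t · sup_{j ∉ A} |e*_j(x)|`. -/
def IsGreedySet {X : Type*} [NormedAddCommGroup X] [NormedSpace ℝ X]
    (f : ℕ → X →L[ℝ] ℝ) (t : ℝ) (x : X) (A : Finset ℕ) : Prop :=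
  ∀ i ∈ A, ∀ j ∉ A, t * |f j x| ≤ |f i x|

/-- Selection of the `m` largest elements (w.r.t. `g`) of a finite set. -/
lemma exists_top_subset (g : ℕ → ℝ) (A : Finset ℕ) :
    ∀ m ≤ A.card, ∃ B ⊆ A, B.card = m ∧ ∀ i ∈ B, ∀ j ∈ A \ B, g j ≤ g i := by
  intro m
  induction m with
  | zero => exact fun _ => ⟨∅, empty_subset _, rfl, by simp⟩
  | succ m ih =>
    intro hm
    obtain ⟨B, hBA, hBc, hB⟩ := ih (le_of_lt (Nat.lt_of_succ_le hm))
    have hne : (A \ B).Nonempty := by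
      rw [← Finset.card_pos, Finset.card_sdiff_of_subset hBA, hBc]
      omega
    obtain ⟨j₀, hj₀, hmax⟩ := (A \ B).exists_max_image g hne
    have hj₀A : j₀ ∈ A := (Finset.mem_sdiff.mp hj₀).1
    have hj₀B : j₀ ∉ B := (Finset.mem_sdiff.mp hj₀).2
    refine ⟨insert j₀ B, ?_, ?_, ?_⟩
    · exact Finset.insert_subset hj₀A hBA
    · rw [Finset.card_insert_of_notMem hj₀B, hBc]
    · intro i hi j hj
      have hjB : j ∈ A \ B := by
        rw [Finset.mem_sdiff] at hj ⊢
        exact ⟨hj.1, fun h => hj.2 (Finset.mem_insert_of_mem h)⟩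
      rcases Finset.mem_insert.mp hi with rfl | hi
      · exact hmax j hjB
      · exact hB i hi j hjB

/-- A `1`-`n`-`t`-suppression-quasi-greedy semi-normalized Markushevich basis of a
Banach space is `(n₁·α₁·α₂ + 1)`-suppression-quasi-greedy; in particular it is
quasi-greedy. -/
theorem stmt_0 {X : Type*} [NormedAddCommGroup X] [NormedSpace ℝ X] [CompleteSpace X]
    (e : ℕ → X) (f : ℕ → X →L[ℝ] ℝ)
    (hdense : Dense (Submodule.span ℝ (Set.range e) : Set X))
    (hbio : ∀ k i, f k (e i) = if k = i then 1 else 0)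
    (htotal : ∀ x : X, (∀ i, f i x = 0) → x = 0)
    (hb1 : BddAbove (Set.range fun i => ‖e i‖))
    (hb2 : BddAbove (Set.range fun i => ‖f i‖))
    (t : ℝ) (ht0 : 0 < t) (ht1 : t ≤ 1)
    (n : ℕ → ℕ) (hn : StrictMono n) (hnpos : ∀ k, 0 < n k)
    (hsq : ∀ (x : X) (A : Finset ℕ), IsGreedySet f t x A → (∃ k, A.card = n k) →
      ‖x - proj e f A x‖ ≤ ‖x‖) :
    (∀ (x : X) (A : Finset ℕ), IsGreedySet f 1 x A →
      ‖x - proj e f A x‖ ≤ ((n 0 : ℝ) * (⨆ i, ‖e i‖) * (⨆ i, ‖f i‖) + 1) * ‖x‖) ∧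
    (∃ C : ℝ, 0 < C ∧ ∀ (x : X) (A : Finset ℕ), IsGreedySet f 1 x A →
      ‖proj e f A x‖ ≤ C * ‖x‖) := by
  set α₁ : ℝ := ⨆ i, ‖e i‖ with hα₁
  set α₂ : ℝ := ⨆ i, ‖f i‖ with hα₂
  have he_le : ∀ i, ‖e i‖ ≤ α₁ := fun i => le_ciSup hb1 i
  have hf_le : ∀ i, ‖f i‖ ≤ α₂ := fun i => le_ciSup hb2 i
  have hα₁0 : 0 ≤ α₁ := le_trans (norm_nonneg (e 0)) (he_le 0)
  have hα₂0 : 0 ≤ α₂ := le_trans (norm_nonneg (f 0)) (hf_le 0)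
  set C : ℝ := (n 0 : ℝ) * α₁ * α₂ + 1 with hC
  have hC1 : (1 : ℝ) ≤ C := by
    have : 0 ≤ (n 0 : ℝ) * α₁ * α₂ :=
      mul_nonneg (mul_nonneg (Nat.cast_nonneg _) hα₁0) hα₂0
    linarith
  have hC0 : 0 ≤ C := le_trans zero_le_one hC1
  -- coefficients of a projection
  have hcoef : ∀ (B : Finset ℕ) (x : X) (j : ℕ),
      f j (proj e f B x) = if j ∈ B then f j x else 0 := by
    intro B x j
    unfold proj
    rw [map_sum]
    simp only [map_smul, hbio, smul_eq_mul, mul_ite, mul_one, mul_zero]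
    exact Finset.sum_ite_eq B j (fun i => f i x)
  -- crude norm bound on a projection
  have hprojnorm : ∀ (B : Finset ℕ) (x : X),
      ‖proj e f B x‖ ≤ (B.card : ℝ) * α₁ * α₂ * ‖x‖ := by
    intro B x
    calc ‖proj e f B x‖ ≤ ∑ i ∈ B, ‖f i x • e i‖ := norm_sum_le _ _
      _ ≤ ∑ i ∈ B, α₂ * ‖x‖ * α₁ := by
          apply Finset.sum_le_sum
          intro i _
          rw [norm_smul]
          have h1 : ‖f i x‖ ≤ α₂ * ‖x‖ :=
            le_trans ((f i).le_opNorm x)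
              (mul_le_mul_of_nonneg_right (hf_le i) (norm_nonneg x))
          exact mul_le_mul h1 (he_le i) (norm_nonneg _)
            (mul_nonneg hα₂0 (norm_nonneg x))
      _ = (B.card : ℝ) * α₁ * α₂ * ‖x‖ := by
          rw [Finset.sum_const, nsmul_eq_mul]; ring
  -- main induction
  have key : ∀ N (x : X) (A : Finset ℕ), A.card ≤ N → IsGreedySet f 1 x A →
      ‖x - proj e f A x‖ ≤ C * ‖x‖ := by
    intro N
    induction N with
    | zero =>
      intro x A hcard _
      have : A = ∅ := Finset.card_eq_zero.mp (Nat.le_zero.mp hcard)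
      subst this
      simp only [proj, Finset.sum_empty, sub_zero]
      nlinarith [norm_nonneg x]
    | succ N ih =>
      intro x A hcard hg
      by_cases hsmall : A.card ≤ n 0
      · calc ‖x - proj e f A x‖ ≤ ‖x‖ + ‖proj e f A x‖ := norm_sub_le _ _
          _ ≤ ‖x‖ + (A.card : ℝ) * α₁ * α₂ * ‖x‖ := by linarith [hprojnorm A x]
          _ ≤ ‖x‖ + (n 0 : ℝ) * α₁ * α₂ * ‖x‖ := by
              have h1 : (A.card : ℝ) ≤ (n 0 : ℝ) := Nat.cast_le.mpr hsmall
              have h := mul_le_mul_of_nonneg_right (mul_le_mul_of_nonneg_right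
                (mul_le_mul_of_nonneg_right h1 hα₁0) hα₂0) (norm_nonneg x)
              linarith
          _ = C * ‖x‖ := by ring
      · push_neg at hsmall
        obtain ⟨B, hBA, hBc, hB⟩ :=
          exists_top_subset (fun i => |f i x|) A (n 0) (le_of_lt hsmall)
        -- B is a t-greedy set for x of admissible size
        have hBg : IsGreedySet f t x B := by
          intro i hi j hj
          have h1 : t * |f j x| ≤ |f j x| := by
            nlinarith [abs_nonneg (f j x)]
          by_cases hjA : j ∈ A
          · exact le_trans h1 (hB i hi j (Finset.mem_sdiff.mpr ⟨hjA, hj⟩))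
          · have := hg i (hBA hi) j hjA
            rw [one_mul] at this
            exact le_trans h1 this
        set y : X := x - proj e f B x with hy
        have hynorm : ‖y‖ ≤ ‖x‖ := hsq x B hBg ⟨0, hBc⟩
        have hycoef : ∀ j, f j y = if j ∈ B then 0 else f j x := by
          intro j
          rw [hy, map_sub, hcoef]
          by_cases hjB : j ∈ B <;> simp [hjB]
        -- A \ B is a 1-greedy set for y
        have hgy : IsGreedySet f 1 y (A \ B) := by
          intro i hi j hj
          rw [Finset.mem_sdiff] at hi
          rw [one_mul, hycoef, hycoef, if_neg hi.2]
          by_cases hjB : j ∈ B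
          · rw [if_pos hjB]; simp [abs_nonneg]
          · rw [if_neg hjB]
            have hjA : j ∉ A := fun h => hj (Finset.mem_sdiff.mpr ⟨h, hjB⟩)
            have := hg i hi.1 j hjA
            rwa [one_mul] at this
        have hcard' : (A \ B).card ≤ N := by
          rw [Finset.card_sdiff_of_subset hBA, hBc]
          have := hnpos 0
          omega
        have hih := ih y (A \ B) hcard' hgy
        have hprojeq : proj e f (A \ B) y = proj e f (A \ B) x := by
          unfold proj
          apply Finset.sum_congr rfl
          intro i hi
          rw [hycoef, if_neg (Finset.mem_sdiff.mp hi).2]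
        have heq : x - proj e f A x = y - proj e f (A \ B) y := by
          rw [hprojeq, hy]
          have hsplit : proj e f (A \ B) x + proj e f B x = proj e f A x :=
            Finset.sum_sdiff hBA
          rw [← hsplit]
          abel
        rw [heq]
        calc ‖y - proj e f (A \ B) y‖ ≤ C * ‖y‖ := hih
          _ ≤ C * ‖x‖ := mul_le_mul_of_nonneg_left hynorm hC0
  have main : ∀ (x : X) (A : Finset ℕ), IsGreedySet f 1 x A →
      ‖x - proj e f A x‖ ≤ C * ‖x‖ := fun x A hg => key A.card x A le_rfl hg
  refine ⟨main, C + 1, by linarith, ?_⟩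
  intro x A hg
  calc ‖proj e f A x‖ = ‖x - (x - proj e f A x)‖ := by rw [sub_sub_cancel]
    _ ≤ ‖x‖ + ‖x - proj e f A x‖ := norm_sub_le _ _
    _ ≤ ‖x‖ + C * ‖x‖ := by linarith [main x A hg]
    _ = (C + 1) * ‖x‖ := by ring
end

section
/- Let X be a real Banach space with a semi-normalized Markushevich basis (e_i, e*_i), let 0 < s ≤ 1, and let n = (n_k) be a strictly increasing sequence of positive integers. Suppose the basis is C-n-s-quasi-greedy with constant C = C_{q,s} ≥ 1. Then for every t with s·(1 − 1/C) < t < s, the basis is n-t-quasi-greedy with constant at most C·t / (s − C·(s − t)); that is, for every x ∈ X and every t-greedy set A for x with |A| ∈ {n_k : k ∈ ℕ}, one has ‖P_A(x)‖ ≤ (C·t / (s − C·(s − t)))·‖x‖. -/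
open Finset

/-
Enlarging the coefficients of `x` on a `t`-greedy set `A` by the factor `s / t`, i.e. passing to
`y = x + ((s - t) / t) • P_A x`, makes `A` an `s`-greedy set for `y` while `P_A y = (s / t) • P_A x`
and `‖y‖ ≤ ‖x‖ + ((s - t) / t) ‖P_A x‖`. The `s`-quasi-greedy bound for `y` then reads
`s ‖P_A x‖ ≤ C t ‖x‖ + C (s - t) ‖P_A x‖`, which can be solved for `‖P_A x‖` as soon as
`C (s - t) < s`.
-/

section Biorthogonal

variable {X : Type*} [NormedAddCommGroup X] [NormedSpace ℝ X]
  {e : ℕ → X} {f : ℕ → X →L[ℝ] ℝ}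

theorem proj_add (A : Finset ℕ) (x y : X) :
    proj e f A (x + y) = proj e f A x + proj e f A y := by
  simp only [proj, map_add, add_smul, sum_add_distrib]

theorem proj_smul (A : Finset ℕ) (c : ℝ) (x : X) :
    proj e f A (c • x) = c • proj e f A x := by
  simp only [proj, map_smul, smul_eq_mul, mul_smul, smul_sum]

theorem apply_proj (hbio : ∀ k i, f k (e i) = if k = i then 1 else 0)
    (A : Finset ℕ) (x : X) (j : ℕ) :
    f j (proj e f A x) = if j ∈ A then f j x else 0 := by
  simp only [proj, map_sum, map_smul, smul_eq_mul, hbio, mul_ite, mul_one, mul_zero]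
  exact sum_ite_eq A j fun i => f i x

theorem proj_proj (hbio : ∀ k i, f k (e i) = if k = i then 1 else 0)
    (A : Finset ℕ) (x : X) : proj e f A (proj e f A x) = proj e f A x :=
  sum_congr rfl fun i hi => by rw [apply_proj hbio, if_pos hi]

theorem IsGreedySet.add_smul_proj (hbio : ∀ k i, f k (e i) = if k = i then 1 else 0)
    {t c : ℝ} {x : X} {A : Finset ℕ} (hA : IsGreedySet f t x A)
    (hc : 0 ≤ 1 + c) : IsGreedySet f ((1 + c) * t) (x + c • proj e f A x) A := by
  have hcoord : ∀ j, f j (x + c • proj e f A x) = if j ∈ A then (1 + c) * f j x else f j x := by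
    intro j
    rw [map_add, map_smul, apply_proj hbio, smul_eq_mul]
    split_ifs <;> ring
  intro i hi j hj
  rw [hcoord i, if_pos hi, hcoord j, if_neg hj, abs_mul, abs_of_nonneg hc, mul_assoc]
  exact mul_le_mul_of_nonneg_left (hA i hi j hj) hc

theorem mul_norm_proj_le_of_isGreedySet (hbio : ∀ k i, f k (e i) = if k = i then 1 else 0)
    {s t C : ℝ} (ht : 0 < t) (hts : t ≤ s) (hC : 0 ≤ C)
    {A : Finset ℕ} (hqg : ∀ y : X, IsGreedySet f s y A → ‖proj e f A y‖ ≤ C * ‖y‖)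
    {x : X} (hA : IsGreedySet f t x A) :
    (s - C * (s - t)) * ‖proj e f A x‖ ≤ C * t * ‖x‖ := by
  set c := (s - t) / t
  set P := proj e f A x
  have hc : 0 ≤ c := div_nonneg (sub_nonneg.mpr hts) ht.le
  have hcst : c * t = s - t := div_mul_cancel₀ _ ht.ne'
  have hct : (1 + c) * t = s := by linarith
  have hy : ‖proj e f A (x + c • P)‖ ≤ C * ‖x + c • P‖ := by
    refine hqg _ ?_
    rw [← hct]
    exact hA.add_smul_proj hbio (by linarith)
  have hPy : proj e f A (x + c • P) = (1 + c) • P := by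
    rw [proj_add, proj_smul, proj_proj hbio, add_smul, one_smul]
  rw [hPy, norm_smul, Real.norm_of_nonneg (by linarith)] at hy
  have hnorm : ‖x + c • P‖ ≤ ‖x‖ + c * ‖P‖ := by
    simpa only [norm_smul, Real.norm_of_nonneg hc] using norm_add_le x (c • P)
  have key : (1 + c) * ‖P‖ * t ≤ C * (‖x‖ + c * ‖P‖) * t :=
    mul_le_mul_of_nonneg_right (hy.trans (mul_le_mul_of_nonneg_left hnorm hC)) ht.le
  linear_combination key + C * ‖P‖ * hcst - ‖P‖ * hct

end Biorthogonal

theorem stmt_1_general {X : Type*} [NormedAddCommGroup X] [NormedSpace ℝ X]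
    (e : ℕ → X) (f : ℕ → X →L[ℝ] ℝ)
    (hbio : ∀ k i, f k (e i) = if k = i then 1 else 0)
    (s : ℝ) (hs0 : 0 < s)
    (n : ℕ → ℕ)
    (C : ℝ) (hC : 1 ≤ C)
    (hqg : ∀ (x : X) (A : Finset ℕ), IsGreedySet f s x A → (∃ k, A.card = n k) →
      ‖proj e f A x‖ ≤ C * ‖x‖) :
    ∀ t : ℝ, s * (1 - 1 / C) < t → t < s →
      ∀ (x : X) (A : Finset ℕ), IsGreedySet f t x A → (∃ k, A.card = n k) →
        ‖proj e f A x‖ ≤ (C * t / (s - C * (s - t))) * ‖x‖ := by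
  intro t ht1 ht2 x A hA hcard
  have hC0 : 0 < C := one_pos.trans_le hC
  have ht0 : 0 < t := by
    have : 0 ≤ 1 - 1 / C := sub_nonneg.mpr ((div_le_one hC0).mpr hC)
    nlinarith
  have hd : 0 < s - C * (s - t) := by
    have : s - t < s / C := by rw [mul_one_sub, mul_one_div] at ht1; linarith
    linarith [(lt_div_iff₀ hC0).mp this]
  rw [div_mul_eq_mul_div, le_div_iff₀ hd, mul_comm]
  exact mul_norm_proj_le_of_isGreedySet hbio ht0 ht2.le hC0.le
    (fun y hy => hqg y A hy hcard) hA

/-- If a semi-normalized Markushevich basis of a Banach space is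
`C`-`n`-`s`-quasi-greedy (`C ≥ 1`), then for every `t` with `s(1 - 1/C) < t < s`
it is `n`-`t`-quasi-greedy with constant at most `C·t / (s - C·(s - t))`. -/
theorem stmt_1 {X : Type*} [NormedAddCommGroup X] [NormedSpace ℝ X] [CompleteSpace X]
    (e : ℕ → X) (f : ℕ → X →L[ℝ] ℝ)
    (hdense : Dense (Submodule.span ℝ (Set.range e) : Set X))
    (hbio : ∀ k i, f k (e i) = if k = i then 1 else 0)
    (htotal : ∀ x : X, (∀ i, f i x = 0) → x = 0)
    (hb1 : BddAbove (Set.range fun i => ‖e i‖))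
    (hb2 : BddAbove (Set.range fun i => ‖f i‖))
    (s : ℝ) (hs0 : 0 < s) (hs1 : s ≤ 1)
    (n : ℕ → ℕ) (hn : StrictMono n) (hnpos : ∀ k, 0 < n k)
    (C : ℝ) (hC : 1 ≤ C)
    (hqg : ∀ (x : X) (A : Finset ℕ), IsGreedySet f s x A → (∃ k, A.card = n k) →
      ‖proj e f A x‖ ≤ C * ‖x‖) :
    ∀ t : ℝ, s * (1 - 1 / C) < t → t < s →
      ∀ (x : X) (A : Finset ℕ), IsGreedySet f t x A → (∃ k, A.card = n k) →
        ‖proj e f A x‖ ≤ (C * t / (s - C * (s - t))) * ‖x‖ :=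
  stmt_1_general e f hbio s hs0 n C hC hqg
end

section
/- Define integers n_1 = 1 and n_{k+1} = n_k + 10^k + 1 for k ≥ 1, and sets A_k = {n_k + 1, …, n_k + 10^k}; these satisfy n_k < A_k < n_{k+1} and ℕ_{≥1} is the disjoint union of {n_k : k ≥ 1} and the sets A_k. Define a real sequence (b_j)_{j≥1} by b_j = 1/√k if j = n_k, and b_j = −1/(10^k·√k) if j ∈ A_k. Then: (a) for every k ≥ 1, ∑_{j=1}^{n_k} b_j = 1/√k; (b) for every k ≥ 1 and every l ∈ A_k, |∑_{j=1}^{l} b_j| < 1/√k; (c) the series ∑_{j=1}^{∞} b_j converges to 0; and (d) sup_{l ≥ 1} |∑_{j=1}^{l} b_j| = 1. -/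
open Finset

/-- `nn k` is the integer `n_k` of the construction: `n_1 = 1`,
`n_{k+1} = n_k + 10^k + 1` for `k ≥ 1` (the value at `0` is irrelevant). -/
def nn : ℕ → ℕ
  | 0 => 0
  | 1 => 1
  | (k + 2) => nn (k + 1) + 10 ^ (k + 1) + 1

lemma nn_succ (k : ℕ) (hk : 1 ≤ k) : nn (k + 1) = nn k + 10 ^ k + 1 := by
  cases k with
  | zero => omega
  | succ m => rfl

lemma nn_block_lt (a : ℕ) (ha : 1 ≤ a) : ∀ b : ℕ, a < b → nn a + 10 ^ a < nn b := by
  intro b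
  induction b with
  | zero => omega
  | succ m ih =>
    intro h
    rcases Nat.lt_succ_iff_lt_or_eq.mp h with h' | rfl
    · have h1 := ih h'
      have h2 := nn_succ m (by omega)
      have h3 : 1 ≤ 10 ^ m := Nat.one_le_pow _ _ (by norm_num)
      omega
    · rw [nn_succ a ha]; omega

lemma nn_ge_one : ∀ k : ℕ, 1 ≤ k → 1 ≤ nn k := by
  intro k hk
  cases k with
  | zero => omega
  | succ m =>
    cases m with
    | zero => exact le_rfl
    | succ p =>
      rw [nn_succ (p + 1) (by omega)]
      have := Nat.one_le_pow (p + 1) 10 (by norm_num)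
      omega

lemma block_exists : ∀ j : ℕ, 1 ≤ j → ∃ k, 1 ≤ k ∧ nn k ≤ j ∧ j ≤ nn k + 10 ^ k := by
  intro j hj
  induction j with
  | zero => omega
  | succ m ih =>
    rcases Nat.eq_zero_or_pos m with rfl | hm
    · refine ⟨1, le_rfl, ?_, ?_⟩ <;> simp [nn]
    · obtain ⟨k, hk, h1, h2⟩ := ih hm
      rcases lt_or_eq_of_le h2 with h | h
      · exact ⟨k, hk, by omega, by omega⟩
      · have h10 : 1 ≤ 10 ^ (k + 1) := Nat.one_le_pow _ _ (by norm_num)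
        refine ⟨k + 1, by omega, ?_, ?_⟩ <;> rw [nn_succ k hk] <;> omega

/-- Properties of the sequence `b` with `b_{n_k} = 1/√k` and
`b_j = -1/(10^k √k)` for `j ∈ A_k = {n_k + 1, …, n_k + 10^k}`:
the blocks tile `ℕ_{≥1}`, the partial sums up to `n_k` equal `1/√k`,
the partial sums inside `A_k` are `< 1/√k` in absolute value, the series
converges to `0`, and the sup of the absolute partial sums is `1`. -/
theorem stmt_2 (b : ℕ → ℝ)
    (hb1 : ∀ k : ℕ, 1 ≤ k → b (nn k) = 1 / Real.sqrt k)
    (hb2 : ∀ k : ℕ, 1 ≤ k → ∀ j : ℕ, nn k < j → j ≤ nn k + 10 ^ k →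
      b j = -(1 / (10 ^ k * Real.sqrt k))) :
    (∀ k : ℕ, 1 ≤ k → nn k + 10 ^ k < nn (k + 1)) ∧
    (∀ j : ℕ, 1 ≤ j →
      ∃! k : ℕ, 1 ≤ k ∧ (j = nn k ∨ (nn k < j ∧ j ≤ nn k + 10 ^ k))) ∧
    (∀ k : ℕ, 1 ≤ k → ∑ j ∈ Finset.Icc 1 (nn k), b j = 1 / Real.sqrt k) ∧
    (∀ k : ℕ, 1 ≤ k → ∀ l : ℕ, nn k < l → l ≤ nn k + 10 ^ k →
      |∑ j ∈ Finset.Icc 1 l, b j| < 1 / Real.sqrt k) ∧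
    Filter.Tendsto (fun l : ℕ => ∑ j ∈ Finset.Icc 1 l, b j) Filter.atTop (nhds 0) ∧
    (⨆ l : ℕ, |∑ j ∈ Finset.Icc 1 (l + 1), b j|) = 1 := by
  -- basic facts
  have hIcc : ∀ n : ℕ, Finset.Icc 1 n = Finset.Ioc 0 n := fun n => Finset.Icc_add_one_left_eq_Ioc 0 n
  have hsqrt_pos : ∀ k : ℕ, 1 ≤ k → (0:ℝ) < Real.sqrt k := by
    intro k hk
    exact Real.sqrt_pos.mpr (by exact_mod_cast hk)
  -- (a)
  have parta : ∀ k : ℕ, 1 ≤ k → nn k + 10 ^ k < nn (k + 1) := by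
    intro k hk
    rw [nn_succ k hk]; omega
  -- (b)
  have partb : ∀ j : ℕ, 1 ≤ j →
      ∃! k : ℕ, 1 ≤ k ∧ (j = nn k ∨ (nn k < j ∧ j ≤ nn k + 10 ^ k)) := by
    intro j hj
    obtain ⟨k, hk, h1, h2⟩ := block_exists j hj
    refine ⟨k, ⟨hk, by omega⟩, ?_⟩
    rintro k' ⟨hk', h'⟩
    have hp : 1 ≤ 10 ^ k' := Nat.one_le_pow _ _ (by norm_num)
    have h1' : nn k' ≤ j := by rcases h' with h | h <;> omega
    have h2' : j ≤ nn k' + 10 ^ k' := by rcases h' with h | h <;> omega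
    rcases lt_trichotomy k' k with h | rfl | h
    · have := nn_block_lt k' hk' k h; omega
    · rfl
    · have := nn_block_lt k hk k' h; omega
  -- (c)
  have partc : ∀ k : ℕ, 1 ≤ k → ∑ j ∈ Finset.Icc 1 (nn k), b j = 1 / Real.sqrt k := by
    intro k hk
    induction k with
    | zero => omega
    | succ m ih =>
      rcases Nat.eq_zero_or_pos m with rfl | hm
      · have hb := hb1 1 le_rfl
        have h1 : nn 1 = 1 := rfl
        rw [h1] at hb ⊢
        rw [Finset.Icc_self, Finset.sum_singleton, hb]
      · have hS := ih hm
        have hsucc := nn_succ m hm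
        have h10n : 1 ≤ 10 ^ m := Nat.one_le_pow _ _ (by norm_num)
        have hmid : ∑ j ∈ Finset.Ioc (nn m) (nn m + 10 ^ m), b j = -(1 / Real.sqrt m) := by
          have hc : ∀ j ∈ Finset.Ioc (nn m) (nn m + 10 ^ m),
              b j = -(1 / (10 ^ m * Real.sqrt m)) := by
            intro j hj
            rw [Finset.mem_Ioc] at hj
            exact hb2 m hm j hj.1 hj.2
          rw [Finset.sum_congr rfl hc, Finset.sum_const, Nat.card_Ioc]
          have h10 : (10:ℝ) ^ m ≠ 0 := by positivity
          have hs := (hsqrt_pos m hm).ne'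
          simp only [Nat.add_sub_cancel_left, nsmul_eq_mul, Nat.cast_pow, Nat.cast_ofNat]
          field_simp
        have hbnext : b (nn m + 10 ^ m + 1) = 1 / Real.sqrt (m + 1 : ℕ) := by
          rw [← hsucc]; exact hb1 (m + 1) (by omega)
        rw [hIcc, hsucc, Finset.sum_Ioc_succ_top (by omega),
          ← Finset.sum_Ioc_consecutive b (by omega : 0 ≤ nn m)
            (by omega : nn m ≤ nn m + 10 ^ m), ← hIcc, hS, hmid, hbnext]
        ring
  -- sum formula inside a block
  have blocksum : ∀ k : ℕ, 1 ≤ k → ∀ l : ℕ, nn k < l → l ≤ nn k + 10 ^ k →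
      ∑ j ∈ Finset.Icc 1 l, b j
        = 1 / Real.sqrt k - (l - nn k : ℕ) * (1 / (10 ^ k * Real.sqrt k)) := by
    intro k hk l h1 h2
    have hc : ∀ j ∈ Finset.Ioc (nn k) l, b j = -(1 / (10 ^ k * Real.sqrt k)) := by
      intro j hj
      rw [Finset.mem_Ioc] at hj
      exact hb2 k hk j hj.1 (le_trans hj.2 h2)
    rw [hIcc, ← Finset.sum_Ioc_consecutive b (by omega : 0 ≤ nn k) (by omega : nn k ≤ l),
      ← hIcc, partc k hk, Finset.sum_congr rfl hc, Finset.sum_const, Nat.card_Ioc,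
      nsmul_eq_mul]
    ring
  -- (d)
  have partd : ∀ k : ℕ, 1 ≤ k → ∀ l : ℕ, nn k < l → l ≤ nn k + 10 ^ k →
      |∑ j ∈ Finset.Icc 1 l, b j| < 1 / Real.sqrt k := by
    intro k hk l h1 h2
    rw [blocksum k hk l h1 h2]
    have hs := hsqrt_pos k hk
    have hm1 : (1:ℝ) ≤ (l - nn k : ℕ) := by
      have : 1 ≤ l - nn k := by omega
      exact_mod_cast this
    have hm2 : ((l - nn k : ℕ) : ℝ) ≤ 10 ^ k := by
      have : l - nn k ≤ 10 ^ k := by omega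
      calc ((l - nn k : ℕ) : ℝ) ≤ ((10 ^ k : ℕ) : ℝ) := by exact_mod_cast this
        _ = 10 ^ k := by push_cast; ring
    have h10 : (0:ℝ) < 10 ^ k := by positivity
    have hpos : (0:ℝ) < 1 / (10 ^ k * Real.sqrt k) := by positivity
    rw [abs_sub_lt_iff]
    constructor
    · nlinarith
    · have hle : ((l - nn k : ℕ) : ℝ) * (1 / (10 ^ k * Real.sqrt k))
          ≤ 10 ^ k * (1 / (10 ^ k * Real.sqrt k)) := by
        exact mul_le_mul_of_nonneg_right hm2 (le_of_lt hpos)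
      have heq : (10:ℝ) ^ k * (1 / (10 ^ k * Real.sqrt k)) = 1 / Real.sqrt k := by
        field_simp
      nlinarith
  -- global bound
  have hbound : ∀ l : ℕ, 1 ≤ l → ∀ K : ℕ, 1 ≤ K → nn K ≤ l →
      |∑ j ∈ Finset.Icc 1 l, b j| ≤ 1 / Real.sqrt K := by
    intro l hl K hK hKl
    obtain ⟨k, hk, h1, h2⟩ := block_exists l hl
    have hkK : K ≤ k := by
      by_contra h
      push_neg at h
      have := nn_block_lt k hk K h
      omega
    have hmono : 1 / Real.sqrt k ≤ 1 / Real.sqrt K := by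
      apply one_div_le_one_div_of_le (hsqrt_pos K hK)
      exact Real.sqrt_le_sqrt (by exact_mod_cast hkK)
    rcases eq_or_lt_of_le h1 with h | h
    · rw [← h, partc k hk, abs_of_pos (by positivity)]
      exact hmono
    · exact le_trans (le_of_lt (partd k hk l h h2)) hmono
  -- (e)
  have parte : Filter.Tendsto (fun l : ℕ => ∑ j ∈ Finset.Icc 1 l, b j)
      Filter.atTop (nhds 0) := by
    rw [Metric.tendsto_atTop]
    intro ε hε
    set K : ℕ := ⌈(1 / ε) ^ 2⌉₊ + 1 with hKdef
    have hK1 : 1 ≤ K := Nat.le_add_left 1 _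
    have hKgt : (1 / ε) ^ 2 < (K : ℝ) := by
      have h1 := Nat.le_ceil ((1 / ε) ^ 2)
      have h2 : ((⌈(1 / ε) ^ 2⌉₊ : ℝ)) < (K : ℝ) := by
        rw [hKdef]; push_cast; linarith
      linarith
    have hsq : 1 / ε < Real.sqrt K := by
      have h := Real.sqrt_lt_sqrt (by positivity) hKgt
      rwa [Real.sqrt_sq (by positivity)] at h
    have h0 : (0:ℝ) < Real.sqrt K := lt_trans (by positivity) hsq
    have hlt : 1 / Real.sqrt K < ε := by
      rw [div_lt_iff₀ h0]
      have := (div_lt_iff₀ hε).mp hsq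
      nlinarith
    have hn1 : 1 ≤ nn K := nn_ge_one K hK1
    refine ⟨nn K, fun l hl => ?_⟩
    rw [Real.dist_eq, sub_zero]
    exact lt_of_le_of_lt (hbound l (by omega) K hK1 hl) hlt
  -- (f)
  have hub : ∀ l : ℕ, |∑ j ∈ Finset.Icc 1 (l + 1), b j| ≤ 1 := by
    intro l
    have hn1 : nn 1 = 1 := rfl
    have h := hbound (l + 1) (by omega) 1 le_rfl (by omega)
    simpa using h
  have partf : (⨆ l : ℕ, |∑ j ∈ Finset.Icc 1 (l + 1), b j|) = 1 := by
    apply le_antisymm (ciSup_le hub)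
    have h1 : |∑ j ∈ Finset.Icc 1 (0 + 1), b j| = 1 := by
      simp only [zero_add, Finset.Icc_self, Finset.sum_singleton]
      rw [show (1:ℕ) = nn 1 from rfl, hb1 1 le_rfl]
      norm_num
    calc (1:ℝ) = |∑ j ∈ Finset.Icc 1 (0 + 1), b j| := h1.symm
      _ ≤ ⨆ l : ℕ, |∑ j ∈ Finset.Icc 1 (l + 1), b j| := by
        apply le_ciSup (f := fun l : ℕ => |∑ j ∈ Finset.Icc 1 (l + 1), b j|)
        exact ⟨1, by rintro x ⟨l, rfl⟩; exact hub l⟩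
  exact ⟨parta, partb, partc, partd, parte, partf⟩
end

section
/- Let X be a real vector space with a quasi-norm ‖·‖ with modulus of concavity α ≥ 1, equipped with a semi-normalized Markushevich basis (e_i, e*_i) with c := sup_i (1+‖e_i‖)(1+‖e*_i‖) < ∞, and assume the linear span of (e_i) is dense in X. Let t ∈ (0,1], x ∈ X, and let A be a t-greedy set for x. Then for every ε > 0 there exists a finitely supported y ∈ X (i.e. y in the linear span of (e_i)) such that ‖x − y‖ ≤ ε and A is a t-greedy set for y. -/
open Finset

/-- Coordinate projection `P_A x = ∑_{i ∈ A} e*_i(x) • e_i`. -/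
def qproj {X : Type*} [AddCommGroup X] [Module ℝ X]
    (e : ℕ → X) (f : ℕ → X →ₗ[ℝ] ℝ) (A : Finset ℕ) (x : X) : X :=
  ∑ i ∈ A, f i x • e i

/-- `A` is a `t`-greedy set for `x`:
`min_{i ∈ A} |e*_i(x)| ≥ t · sup_{j ∉ A} |e*_j(x)|`. -/
def qGreedySet {X : Type*} [AddCommGroup X] [Module ℝ X]
    (f : ℕ → X →ₗ[ℝ] ℝ) (t : ℝ) (x : X) (A : Finset ℕ) : Prop :=
  ∀ i ∈ A, ∀ j ∉ A, t * |f j x| ≤ |f i x|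

/-- Iterated quasi-triangle inequality for finite sums. -/
lemma qsum_le {X : Type*} [AddCommGroup X] (q : X → ℝ) (α : ℝ) (hα : 1 ≤ α)
    (hq0 : ∀ x : X, 0 ≤ q x) (hqz : q (0 : X) = 0)
    (hqa : ∀ x y : X, q (x + y) ≤ α * (q x + q y)) (s : Finset ℕ) (g : ℕ → X) :
    q (∑ i ∈ s, g i) ≤ α ^ s.card * ∑ i ∈ s, q (g i) := by
  induction s using Finset.induction with
  | empty => simp [hqz]
  | @insert a s ha ih =>
    rw [Finset.sum_insert ha, Finset.sum_insert ha, Finset.card_insert_of_notMem ha,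
      pow_succ]
    have h1 : (1 : ℝ) ≤ α ^ s.card := one_le_pow₀ hα
    have h2 : (0 : ℝ) ≤ ∑ i ∈ s, q (g i) := Finset.sum_nonneg fun i _ => hq0 _
    have h3 := hqa (g a) (∑ i ∈ s, g i)
    have h4 := hq0 (g a)
    have hα' : (0 : ℝ) ≤ α := by linarith
    nlinarith [hq0 (∑ i ∈ s, g i), mul_le_mul_of_nonneg_left ih hα',
      mul_nonneg (mul_nonneg hα' h4) (sub_nonneg.mpr h1)]

/-- Perturbation lemma in quasi-Banach spaces: if `A` is a `t`-greedy set for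
`x`, then for every `ε > 0` there is a finitely supported `y` with
`q(x − y) ≤ ε` such that `A` is still a `t`-greedy set for `y`. -/
theorem stmt_8 {X : Type*} [AddCommGroup X] [Module ℝ X]
    (q : X → ℝ) (α : ℝ) (hα : 1 ≤ α)
    (hq0 : ∀ x : X, 0 ≤ q x) (hqz : ∀ x : X, q x = 0 ↔ x = 0)
    (hqs : ∀ (a : ℝ) (x : X), q (a • x) = |a| * q x)
    (hqa : ∀ x y : X, q (x + y) ≤ α * (q x + q y))
    (e : ℕ → X) (f : ℕ → X →ₗ[ℝ] ℝ) (fn : ℕ → ℝ)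
    (hfn0 : ∀ i, 0 ≤ fn i) (hfb : ∀ (i : ℕ) (x : X), |f i x| ≤ fn i * q x)
    (hbio : ∀ k i, f k (e i) = if k = i then 1 else 0)
    (c : ℝ) (hc : ∀ i, (1 + q (e i)) * (1 + fn i) ≤ c)
    (hdense : ∀ x : X, ∀ ε : ℝ, 0 < ε →
      ∃ y ∈ Submodule.span ℝ (Set.range e), q (x - y) ≤ ε)
    (t : ℝ) (ht0 : 0 < t) (ht1 : t ≤ 1)
    (x : X) (A : Finset ℕ) (hA : qGreedySet f t x A) :
    ∀ ε : ℝ, 0 < ε → ∃ y ∈ Submodule.span ℝ (Set.range e),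
      q (x - y) ≤ ε ∧ qGreedySet f t y A := by
  intro ε hε
  have hα0 : (0 : ℝ) < α := lt_of_lt_of_le one_pos hα
  have hqz0 : q (0 : X) = 0 := (hqz 0).mpr rfl
  have hc1 : (1 : ℝ) ≤ c := le_trans (by nlinarith [hq0 (e 0), hfn0 0]) (hc 0)
  have hc0 : (0 : ℝ) < c := lt_of_lt_of_le one_pos hc1
  have hfnc : ∀ i, fn i ≤ c - 1 := fun i => by nlinarith [hc i, hq0 (e i), hfn0 i]
  have hec : ∀ i, q (e i) ≤ c - 1 := fun i => by nlinarith [hc i, hq0 (e i), hfn0 i]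
  have hfec : ∀ i, fn i * q (e i) ≤ c := fun i => by nlinarith [hc i, hq0 (e i), hfn0 i]
  have hqneg : ∀ z : X, q (-z) = q z := fun z => by
    have := hqs (-1) z
    rw [neg_one_smul] at this
    simpa using this
  set n := A.card with hn
  have hMnn : (0 : ℝ) ≤ α ^ n * n * c :=
    mul_nonneg (mul_nonneg (pow_nonneg hα0.le _) (Nat.cast_nonneg n)) hc0.le
  have hKpos : (0 : ℝ) < α + α ^ (n + 2) * n * c * (1 + t * c) := by
    have h1 : (0 : ℝ) ≤ α ^ (n + 2) * n * c * (1 + t * c) := by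
      refine mul_nonneg (mul_nonneg (mul_nonneg (pow_nonneg hα0.le _)
        (Nat.cast_nonneg n)) hc0.le) ?_
      nlinarith
    linarith
  set K : ℝ := α + α ^ (n + 2) * n * c * (1 + t * c) with hKdef
  set δ : ℝ := ε / K with hδdef
  have hδ : 0 < δ := div_pos hε hKpos
  have hδK : δ * K = ε := div_mul_cancel₀ ε hKpos.ne'
  set θ : ℝ := t * c * δ with hθdef
  have hθ0 : 0 < θ := mul_pos (mul_pos ht0 hc0) hδ
  obtain ⟨v, hvspan, hqv⟩ := hdense x δ hδ
  set s : ℕ → ℝ := fun i => if 0 ≤ f i x then θ else -θ with hs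
  set u : X := ∑ i ∈ A, s i • e i with hu
  set y : X := v + qproj e f A (x - v) + u with hy
  -- coordinate computations
  have hfe_out : ∀ (g : ℕ → ℝ), ∀ j ∉ A, f j (∑ i ∈ A, g i • e i) = 0 := by
    intro g j hj
    rw [map_sum]
    refine Finset.sum_eq_zero fun i hi => ?_
    rw [map_smul, hbio]
    have : j ≠ i := fun h => hj (h ▸ hi)
    simp [this]
  have hfe_in : ∀ (g : ℕ → ℝ), ∀ i ∈ A, f i (∑ k ∈ A, g k • e k) = g i := by
    intro g i hi
    rw [map_sum, Finset.sum_eq_single i (fun b hb hbi => by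
      rw [map_smul, hbio]; simp [Ne.symm hbi]) (fun h => absurd hi h)]
    rw [map_smul, hbio]
    simp
  have hyout : ∀ j ∉ A, f j y = f j v := by
    intro j hj
    have h1 := hfe_out (fun i => f i (x - v)) j hj
    have h2 := hfe_out s j hj
    simp only [hy, hu, map_add, qproj] at *
    rw [h1, h2]
    ring
  have hyin : ∀ i ∈ A, f i y = f i x + s i := by
    intro i hi
    have h1 := hfe_in (fun k => f k (x - v)) i hi
    have h2 := hfe_in s i hi
    simp only [hy, hu, map_add, qproj] at *
    rw [h1, h2, map_sub]
    ring
  have habs : ∀ i ∈ A, |f i y| = |f i x| + θ := by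
    intro i hi
    rw [hyin i hi, hs]
    dsimp only
    split_ifs with h
    · rw [abs_of_nonneg h, abs_of_nonneg (by linarith)]
    · push_neg at h
      rw [abs_of_neg h, abs_of_neg (by linarith)]
      ring
  refine ⟨y, ?_, ?_, ?_⟩
  · -- y is finitely supported
    refine Submodule.add_mem _ (Submodule.add_mem _ hvspan ?_) ?_
    · exact Submodule.sum_mem _ fun i _ =>
        Submodule.smul_mem _ _ (Submodule.subset_span ⟨i, rfl⟩)
    · exact Submodule.sum_mem _ fun i _ =>
        Submodule.smul_mem _ _ (Submodule.subset_span ⟨i, rfl⟩)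
  · -- error estimate
    have hxy : x - y = (x - v) + (-(qproj e f A (x - v)) + -u) := by
      rw [hy]; abel
    have hqp : q (qproj e f A (x - v)) ≤ α ^ n * n * c * δ := by
      have h0 : q (qproj e f A (x - v)) ≤ α ^ n * ∑ i ∈ A, q (f i (x - v) • e i) := by
        rw [hn]
        exact qsum_le q α hα hq0 hqz0 hqa A _
      have h1 : ∑ i ∈ A, q (f i (x - v) • e i) ≤ ∑ i ∈ A, c * δ := by
        refine Finset.sum_le_sum fun i hi => ?_
        rw [hqs]
        have ha := hfb i (x - v)
        have hb := hfec i
        have hd := hq0 (e i)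
        have he : q (x - v) ≤ δ := hqv
        nlinarith [abs_nonneg (f i (x - v)), hfn0 i, hδ.le, hq0 (x - v),
          mul_le_mul_of_nonneg_right ha hd,
          mul_le_mul_of_nonneg_right (mul_le_mul_of_nonneg_left he (hfn0 i)) hd,
          mul_le_mul_of_nonneg_right hb hδ.le]
      rw [Finset.sum_const, nsmul_eq_mul, ← hn] at h1
      calc q (qproj e f A (x - v)) ≤ α ^ n * ∑ i ∈ A, q (f i (x - v) • e i) := h0
        _ ≤ α ^ n * (n * (c * δ)) :=
            mul_le_mul_of_nonneg_left h1 (pow_nonneg hα0.le n)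
        _ = α ^ n * n * c * δ := by ring
    have hqu : q u ≤ α ^ n * n * c * θ := by
      have h0 : q u ≤ α ^ n * ∑ i ∈ A, q (s i • e i) := by
        rw [hu, hn]
        exact qsum_le q α hα hq0 hqz0 hqa A _
      have h1 : ∑ i ∈ A, q (s i • e i) ≤ ∑ i ∈ A, c * θ := by
        refine Finset.sum_le_sum fun i hi => ?_
        rw [hqs]
        have hsi : |s i| = θ := by
          rw [hs]; dsimp only; split_ifs
          · exact abs_of_pos hθ0
          · rw [abs_neg]; exact abs_of_pos hθ0
        rw [hsi]
        nlinarith [hec i, hq0 (e i)]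
      rw [Finset.sum_const, nsmul_eq_mul, ← hn] at h1
      calc q u ≤ α ^ n * ∑ i ∈ A, q (s i • e i) := h0
        _ ≤ α ^ n * (n * (c * θ)) :=
            mul_le_mul_of_nonneg_left h1 (pow_nonneg hα0.le n)
        _ = α ^ n * n * c * θ := by ring
    have h6 : q (-(qproj e f A (x - v)) + -u) ≤
        α * (α ^ n * n * c * δ + α ^ n * n * c * θ) := by
      refine le_trans (hqa _ _) ?_
      rw [hqneg, hqneg]
      exact mul_le_mul_of_nonneg_left (add_le_add hqp hqu) hα0.le
    have key : q (x - y) ≤ α * (δ + α * (α ^ n * n * c * δ + α ^ n * n * c * θ)) := by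
      rw [hxy]
      exact le_trans (hqa _ _)
        (mul_le_mul_of_nonneg_left (add_le_add hqv h6) hα0.le)
    have heq : α * (δ + α * (α ^ n * n * c * δ + α ^ n * n * c * θ)) = ε := by
      rw [← hδK, hKdef, hθdef]
      ring
    linarith [key, heq.le]
  · -- A is a t-greedy set for y
    intro i hi j hj
    rw [hyout j hj, habs i hi]
    have h1 : |f j v| ≤ |f j x| + fn j * δ := by
      have ha := hfb j (v - x)
      have hb : q (v - x) ≤ δ := by
        rw [show v - x = -(x - v) by abel, hqneg]
        exact hqv
      calc |f j v| = |f j x + f j (v - x)| := by rw [map_sub]; ring_nf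
        _ ≤ |f j x| + |f j (v - x)| := abs_add_le _ _
        _ ≤ |f j x| + fn j * δ := by
            have := mul_le_mul_of_nonneg_left hb (hfn0 j)
            linarith
    have h3 := hA i hi j hj
    have h4 := hfnc j
    have h5 : t * |f j v| ≤ t * (|f j x| + fn j * δ) :=
      mul_le_mul_of_nonneg_left h1 ht0.le
    have h7 : t * (fn j * δ) ≤ t * ((c - 1) * δ) := by
      refine mul_le_mul_of_nonneg_left ?_ ht0.le
      exact mul_le_mul_of_nonneg_right h4 hδ.le
    nlinarith [mul_pos ht0 hδ, hθdef.le, hθdef.ge]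
end

section
/- Let X be a real vector space with a quasi-norm ‖·‖ with modulus of concavity α ≥ 1, equipped with a semi-normalized Markushevich basis (e_i, e*_i) with c := sup_i (1+‖e_i‖)(1+‖e*_i‖) < ∞, and assume the linear span of (e_i) is dense in X. Let t ∈ (0,1] and n = (n_k) a strictly increasing sequence of positive integers. Suppose there is C > 0 such that for every finitely supported x ∈ X and every t-greedy set A for x with |A| ∈ {n_k : k ∈ ℕ}, ‖P_A(x)‖ ≤ C·‖x‖. Then for every x ∈ X and every t-greedy set A for x with |A| ∈ {n_k : k ∈ ℕ}, ‖P_A(x)‖ ≤ α²·C·‖x‖. -/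
open Finset

/-!
Approximate `x` by a finitely supported `y`. Replacing the coordinates of `y` on `A` by those
of `x`, each pushed away from `0` by `θ = t · c · ‖x - y‖`, gives a finitely supported `u` for
which `A` is still `t`-greedy (as `|e*_j| ≤ c ‖·‖`, the coordinates of `y` off `A` exceed those
of `x` by at most `c ‖x - y‖`), with `‖u - x‖` and `‖P_A u - P_A x‖` both `O(‖x - y‖)`.
Applying the hypothesis to `u` and the quasi-triangle inequality twice gives
`‖P_A x‖ ≤ α² C ‖x‖ + O(‖x - y‖)`, and the error term can be made arbitrarily small.
-/

theorem le_of_forall_pos_le_add_mul {a b K : ℝ} (hK : 0 ≤ K)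
    (h : ∀ ε : ℝ, 0 < ε → a ≤ b + K * ε) : a ≤ b := by
  refine le_of_forall_pos_le_add fun δ hδ => ?_
  have hK1 : 0 < K + 1 := by linarith
  calc a ≤ b + K * (δ / (K + 1)) := h _ (by positivity)
    _ ≤ b + δ := by
        rw [mul_div_assoc']
        gcongr
        rw [div_le_iff₀ hK1]
        nlinarith

theorem exists_abs_eq_abs_add_eq_abs_add (a : ℝ) {θ : ℝ} (hθ : 0 ≤ θ) :
    ∃ d : ℝ, |d| = θ ∧ |a + d| = |a| + θ := by
  rcases le_or_gt 0 a with ha | ha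
  · exact ⟨θ, abs_of_nonneg hθ, by rw [abs_of_nonneg ha, abs_of_nonneg (by linarith)]⟩
  · refine ⟨-θ, by rw [abs_neg, abs_of_nonneg hθ], ?_⟩
    rw [abs_of_neg ha, abs_of_neg (by linarith)]
    ring

section QuasiSeminorm

variable {X : Type*} [AddCommGroup X] [Module ℝ X]

structure IsQuasiSeminorm (q : X → ℝ) (α : ℝ) : Prop where
  one_le : 1 ≤ α
  nonneg : ∀ x, 0 ≤ q x
  smul : ∀ (a : ℝ) (x : X), q (a • x) = |a| * q x
  add_le : ∀ x y, q (x + y) ≤ α * (q x + q y)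

namespace IsQuasiSeminorm

variable {q : X → ℝ} {α : ℝ}

theorem modulus_pos (hq : IsQuasiSeminorm q α) : 0 < α :=
  zero_lt_one.trans_le hq.one_le

theorem map_zero (hq : IsQuasiSeminorm q α) : q 0 = 0 := by
  simpa using hq.smul 0 0

theorem map_neg (hq : IsQuasiSeminorm q α) (x : X) : q (-x) = q x := by
  simpa using hq.smul (-1) x

theorem map_sub_comm (hq : IsQuasiSeminorm q α) (x y : X) : q (x - y) = q (y - x) := by
  rw [← neg_sub, hq.map_neg]

theorem sub_le (hq : IsQuasiSeminorm q α) (x y : X) : q (x - y) ≤ α * (q x + q y) := by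
  simpa [sub_eq_add_neg, hq.map_neg] using hq.add_le x (-y)

theorem sum_le {ι : Type*} (hq : IsQuasiSeminorm q α) (B : Finset ι) (v : ι → X) :
    q (∑ i ∈ B, v i) ≤ α ^ #B * ∑ i ∈ B, q (v i) := by
  classical
  induction B using Finset.induction_on with
  | empty => simp [hq.map_zero]
  | insert a B ha ih =>
    rw [sum_insert ha, sum_insert ha, card_insert_of_notMem ha, pow_succ']
    have hv : q (v a) ≤ α ^ #B * q (v a) :=
      le_mul_of_one_le_left (hq.nonneg _) (one_le_pow₀ hq.one_le)
    calc q (v a + ∑ i ∈ B, v i) ≤ α * (q (v a) + q (∑ i ∈ B, v i)) := hq.add_le _ _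
      _ ≤ α * (α ^ #B * q (v a) + α ^ #B * ∑ i ∈ B, q (v i)) := by
          gcongr
          exact hq.modulus_pos.le
      _ = α * α ^ #B * (q (v a) + ∑ i ∈ B, q (v i)) := by ring

theorem sum_smul_le {ι : Type*} (hq : IsQuasiSeminorm q α) {B : Finset ι} {a : ι → ℝ} {M : ℝ}
    (ha : ∀ i ∈ B, |a i| ≤ M) (e : ι → X) :
    q (∑ i ∈ B, a i • e i) ≤ M * (α ^ #B * ∑ i ∈ B, q (e i)) :=
  calc q (∑ i ∈ B, a i • e i) ≤ α ^ #B * ∑ i ∈ B, q (a i • e i) := hq.sum_le B _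
    _ ≤ α ^ #B * ∑ i ∈ B, M * q (e i) := by
        have := hq.modulus_pos
        gcongr with i hi
        rw [hq.smul]
        exact mul_le_mul_of_nonneg_right (ha i hi) (hq.nonneg _)
    _ = M * (α ^ #B * ∑ i ∈ B, q (e i)) := by rw [← mul_sum]; ring

end IsQuasiSeminorm

end QuasiSeminorm

section Biorthogonal

variable {X : Type*} [AddCommGroup X] [Module ℝ X] {e : ℕ → X} {f : ℕ → X →ₗ[ℝ] ℝ}

theorem coord_sum_smul (hbio : ∀ k i, f k (e i) = if k = i then 1 else 0)
    (B : Finset ℕ) (a : ℕ → ℝ) (k : ℕ) :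
    f k (∑ i ∈ B, a i • e i) = if k ∈ B then a k else 0 := by
  simp only [map_sum, map_smul, smul_eq_mul, hbio, mul_ite, mul_one, mul_zero, sum_ite_eq]

theorem coord_qproj (hbio : ∀ k i, f k (e i) = if k = i then 1 else 0)
    (A : Finset ℕ) (x : X) (k : ℕ) :
    f k (qproj e f A x) = if k ∈ A then f k x else 0 :=
  coord_sum_smul hbio A _ k

theorem sum_smul_mem_span (B : Finset ℕ) (a : ℕ → ℝ) :
    ∑ i ∈ B, a i • e i ∈ Submodule.span ℝ (Set.range e) :=
  Submodule.sum_mem _ fun i _ => Submodule.smul_mem _ _ (Submodule.subset_span ⟨i, rfl⟩)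

theorem qGreedySet.of_coord_le {t θ : ℝ} {x u : X} {A : Finset ℕ} (hA : qGreedySet f t x A)
    (hin : ∀ i ∈ A, |f i x| + θ ≤ |f i u|) (hout : ∀ j ∉ A, t * |f j u| ≤ t * |f j x| + θ) :
    qGreedySet f t u A :=
  fun i hi j hj => by linarith [hA i hi j hj, hout j hj, hin i hi]

variable {A : Finset ℕ} {x y : X} {d : ℕ → ℝ}

theorem coord_perturbation (hbio : ∀ k i, f k (e i) = if k = i then 1 else 0) (k : ℕ) :
    f k (y - qproj e f A (y - x) + ∑ i ∈ A, d i • e i) = if k ∈ A then f k x + d k else f k y := by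
  rw [map_add, map_sub, coord_qproj hbio, coord_sum_smul hbio, map_sub]
  split_ifs <;> ring

theorem qproj_perturbation (hbio : ∀ k i, f k (e i) = if k = i then 1 else 0) :
    qproj e f A (y - qproj e f A (y - x) + ∑ i ∈ A, d i • e i) =
      qproj e f A x + ∑ i ∈ A, d i • e i := by
  refine (sum_congr rfl fun i hi => ?_).trans sum_add_distrib
  rw [coord_perturbation hbio, if_pos hi, add_smul]

theorem exists_qGreedySet_perturbation (hbio : ∀ k i, f k (e i) = if k = i then 1 else 0)
    {t θ : ℝ} (ht : 0 ≤ t) (hθ : 0 ≤ θ) (hA : qGreedySet f t x A) (hyx : ∀ j, t * |f j (y - x)| ≤ θ) :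
    ∃ d : ℕ → ℝ, (∀ i, |d i| = θ) ∧
      qGreedySet f t (y - qproj e f A (y - x) + ∑ i ∈ A, d i • e i) A := by
  choose d hd hxd using fun i => exists_abs_eq_abs_add_eq_abs_add (f i x) hθ
  refine ⟨d, hd, hA.of_coord_le (θ := θ) (fun i hi => ?_) (fun j hj => ?_)⟩
  · rw [coord_perturbation hbio, if_pos hi, hxd]
  · rw [coord_perturbation hbio, if_neg hj]
    have hy : |f j y| ≤ |f j x| + |f j (y - x)| := by
      simpa [map_sub] using abs_add_le (f j x) (f j (y - x))
    nlinarith [hyx j]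

end Biorthogonal

theorem exists_qproj_le_add_mul_dist {X : Type*} [AddCommGroup X] [Module ℝ X]
    {q : X → ℝ} {α : ℝ} (hq : IsQuasiSeminorm q α) {e : ℕ → X} {f : ℕ → X →ₗ[ℝ] ℝ}
    (hbio : ∀ k i, f k (e i) = if k = i then 1 else 0) {c : ℝ} (hc : 0 ≤ c)
    (hfc : ∀ (i : ℕ) (z : X), |f i z| ≤ c * q z) {t C : ℝ} (ht : 0 ≤ t) (hC : 0 ≤ C)
    {A : Finset ℕ} (hfin : ∀ u ∈ Submodule.span ℝ (Set.range e), qGreedySet f t u A →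
      q (qproj e f A u) ≤ C * q u)
    {x : X} (hA : qGreedySet f t x A) :
    ∃ K, 0 ≤ K ∧ ∀ y ∈ Submodule.span ℝ (Set.range e),
      q (qproj e f A x) ≤ α ^ 2 * C * q x + K * q (x - y) := by
  have hα := hq.modulus_pos.le
  set N := α ^ #A * ∑ i ∈ A, q (e i)
  have hN : 0 ≤ N := mul_nonneg (by positivity) (sum_nonneg fun i _ => hq.nonneg _)
  refine ⟨α ^ 2 * C * (α * (α * (1 + c * N) + t * c * N)) + α * (t * c * N), by positivity,
    fun y hy => ?_⟩
  set ε := q (y - x)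
  have hε : 0 ≤ ε := hq.nonneg _
  obtain ⟨d, hd, hgreedy⟩ := exists_qGreedySet_perturbation hbio ht
    (by positivity : 0 ≤ t * c * ε) hA fun j => by
      rw [mul_assoc]; exact mul_le_mul_of_nonneg_left (hfc j _) ht
  set D := ∑ i ∈ A, d i • e i
  set u := y - qproj e f A (y - x) + D
  have hu : u ∈ Submodule.span ℝ (Set.range e) :=
    add_mem (sub_mem hy (sum_smul_mem_span _ _)) (sum_smul_mem_span _ _)
  have hD : q D ≤ t * c * ε * N := hq.sum_smul_le (fun i _ => (hd i).le) e
  have hPyx : q (qproj e f A (y - x)) ≤ c * ε * N := hq.sum_smul_le (fun i _ => hfc i _) e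
  have hux : q (u - x) ≤ α * (α * (ε + c * ε * N) + t * c * ε * N) :=
    calc q (u - x) = q ((y - x - qproj e f A (y - x)) + D) := by simp only [u]; abel_nf
      _ ≤ α * (q (y - x - qproj e f A (y - x)) + q D) := hq.add_le _ _
      _ ≤ α * (α * (ε + c * ε * N) + t * c * ε * N) := by
          gcongr
          exact (hq.sub_le _ _).trans (by gcongr)
  have hqu : q u ≤ α * (q x + q (u - x)) := by simpa using hq.add_le x (u - x)
  calc q (qproj e f A x) = q (qproj e f A u - D) := by
        rw [qproj_perturbation hbio, add_sub_cancel_right]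
    _ ≤ α * (q (qproj e f A u) + q D) := hq.sub_le _ _
    _ ≤ α * (C * (α * (q x + α * (α * (ε + c * ε * N) + t * c * ε * N))) + t * c * ε * N) := by
        gcongr
        exact (hfin u hu hgreedy).trans (by gcongr; exact hqu.trans (by gcongr))
    _ = α ^ 2 * C * q x +
          (α ^ 2 * C * (α * (α * (1 + c * N) + t * c * N)) + α * (t * c * N)) * q (x - y) := by
        rw [hq.map_sub_comm x y]; ring

theorem stmt_9_general {X : Type*} [AddCommGroup X] [Module ℝ X]
    (q : X → ℝ) (α : ℝ) (hα : 1 ≤ α)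
    (hq0 : ∀ x : X, 0 ≤ q x)
    (hqs : ∀ (a : ℝ) (x : X), q (a • x) = |a| * q x)
    (hqa : ∀ x y : X, q (x + y) ≤ α * (q x + q y))
    (e : ℕ → X) (f : ℕ → X →ₗ[ℝ] ℝ) (fn : ℕ → ℝ)
    (hfn0 : ∀ i, 0 ≤ fn i) (hfb : ∀ (i : ℕ) (x : X), |f i x| ≤ fn i * q x)
    (hbio : ∀ k i, f k (e i) = if k = i then 1 else 0)
    (c : ℝ) (hc : ∀ i, (1 + q (e i)) * (1 + fn i) ≤ c)
    (hdense : ∀ x : X, ∀ ε : ℝ, 0 < ε →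
      ∃ y ∈ Submodule.span ℝ (Set.range e), q (x - y) ≤ ε)
    (t : ℝ) (ht0 : 0 < t)
    (n : ℕ → ℕ)
    (C : ℝ) (hC : 0 < C)
    (hfin : ∀ x ∈ Submodule.span ℝ (Set.range e), ∀ A : Finset ℕ,
      qGreedySet f t x A → (∃ k, A.card = n k) → q (qproj e f A x) ≤ C * q x) :
    ∀ (x : X) (A : Finset ℕ), qGreedySet f t x A → (∃ k, A.card = n k) →
      q (qproj e f A x) ≤ α ^ 2 * C * q x := by
  intro x A hA hcard
  have hfnc : ∀ i, fn i ≤ c := fun i => by nlinarith [hq0 (e i), hfn0 i, hc i]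
  have hfc : ∀ i z, |f i z| ≤ c * q z := fun i z =>
    (hfb i z).trans (mul_le_mul_of_nonneg_right (hfnc i) (hq0 z))
  obtain ⟨K, hK, hbound⟩ := exists_qproj_le_add_mul_dist ⟨hα, hq0, hqs, hqa⟩ hbio
    ((hfn0 0).trans (hfnc 0)) hfc ht0.le hC.le (fun u hu hgreedy => hfin u hu A hgreedy hcard) hA
  refine le_of_forall_pos_le_add_mul hK fun ε hε => ?_
  obtain ⟨y, hy, hxy⟩ := hdense x ε hε
  exact (hbound y hy).trans (by gcongr)

/-- If the `t`-greedy projections of cardinality in `n` are bounded by `C` on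
finitely supported vectors, they are bounded by `α²·C` on the whole space. -/
theorem stmt_9 {X : Type*} [AddCommGroup X] [Module ℝ X]
    (q : X → ℝ) (α : ℝ) (hα : 1 ≤ α)
    (hq0 : ∀ x : X, 0 ≤ q x) (hqz : ∀ x : X, q x = 0 ↔ x = 0)
    (hqs : ∀ (a : ℝ) (x : X), q (a • x) = |a| * q x)
    (hqa : ∀ x y : X, q (x + y) ≤ α * (q x + q y))
    (e : ℕ → X) (f : ℕ → X →ₗ[ℝ] ℝ) (fn : ℕ → ℝ)
    (hfn0 : ∀ i, 0 ≤ fn i) (hfb : ∀ (i : ℕ) (x : X), |f i x| ≤ fn i * q x)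
    (hbio : ∀ k i, f k (e i) = if k = i then 1 else 0)
    (c : ℝ) (hc : ∀ i, (1 + q (e i)) * (1 + fn i) ≤ c)
    (hdense : ∀ x : X, ∀ ε : ℝ, 0 < ε →
      ∃ y ∈ Submodule.span ℝ (Set.range e), q (x - y) ≤ ε)
    (t : ℝ) (ht0 : 0 < t) (ht1 : t ≤ 1)
    (n : ℕ → ℕ) (hn : StrictMono n) (hnpos : ∀ k, 0 < n k)
    (C : ℝ) (hC : 0 < C)
    (hfin : ∀ x ∈ Submodule.span ℝ (Set.range e), ∀ A : Finset ℕ,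
      qGreedySet f t x A → (∃ k, A.card = n k) → q (qproj e f A x) ≤ C * q x) :
    ∀ (x : X) (A : Finset ℕ), qGreedySet f t x A → (∃ k, A.card = n k) →
      q (qproj e f A x) ≤ α ^ 2 * C * q x :=
  stmt_9_general q α hα hq0 hqs hqa e f fn hfn0 hfb hbio c hc hdense t ht0 n C hC hfin
end

section
/- Let X be a real vector space with a quasi-norm ‖·‖ with modulus of concavity α ≥ 1, complete with respect to ‖·‖ (every sequence (y_p) with ‖y_p − y_q‖ → 0 as p,q → ∞ converges in X), equipped with a semi-normalized Markushevich basis (e_i, e*_i) with c := sup_i (1+‖e_i‖)(1+‖e*_i‖) < ∞. Let t ∈ (0,1] and n = (n_k) a strictly increasing sequence of positive integers. Suppose that for every x ∈ X there is C₄(x) > 0 such that ‖P_A(x)‖ ≤ C₄(x) for every t-greedy set A for x with |A| ∈ {n_k : k ∈ ℕ}. Then there exist m ∈ ℕ and C₃ > 0 such that for every finitely supported x ∈ X with supp(x) ⊆ (m, ∞) and every t-greedy set A for x with |A| ∈ {n_k : k ∈ ℕ}, ‖P_A(x)‖ ≤ C₃·‖x‖. -/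
open Finset

lemma top_subset (g : ℕ → ℝ) : ∀ (r : ℕ) (A : Finset ℕ), r ≤ A.card →
    ∃ B, B ⊆ A ∧ B.card = r ∧ ∀ i ∈ B, ∀ j ∈ A \ B, g j ≤ g i := by
  intro r
  induction r with
  | zero => exact fun A _ => ⟨∅, empty_subset _, card_empty, by simp⟩
  | succ r ih =>
    intro A hr
    obtain ⟨B, hBA, hBc, hBtop⟩ := ih A (Nat.le_of_succ_le hr)
    have hne : (A \ B).Nonempty := by
      rw [← Finset.card_pos, card_sdiff_of_subset hBA, hBc]; omega
    obtain ⟨m, hm, hmax⟩ := Finset.exists_max_image (A \ B) g hne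
    have hmA := (mem_sdiff.1 hm).1
    have hmB := (mem_sdiff.1 hm).2
    refine ⟨insert m B, insert_subset hmA hBA, by rw [card_insert_of_notMem hmB, hBc], ?_⟩
    intro i hi j hj
    have hj' : j ∈ A \ B := by
      rcases mem_sdiff.1 hj with ⟨hjA, hjB⟩
      exact mem_sdiff.2 ⟨hjA, fun h => hjB (mem_insert_of_mem h)⟩
    rcases mem_insert.1 hi with h | h
    · subst h; exact hmax j hj'
    · exact hBtop i h j hj'

section QN
variable {X : Type*} [AddCommGroup X] [Module ℝ X]
variable (q : X → ℝ) (α : ℝ) (hα : 1 ≤ α)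
variable (hq0 : ∀ x : X, 0 ≤ q x) (hq00 : q 0 = 0)
variable (hqa : ∀ x y : X, q (x + y) ≤ α * (q x + q y))

include hα hq0 hq00 hqa in
lemma qsum_le_s11 (F : Finset ℕ) (v : ℕ → X) :
    q (∑ i ∈ F, v i) ≤ α ^ F.card * ∑ i ∈ F, q (v i) := by
  induction F using Finset.cons_induction with
  | empty => simp [hq00]
  | cons a F ha ih =>
    rw [Finset.sum_cons, Finset.sum_cons, card_cons]
    have h1 := hqa (v a) (∑ i ∈ F, v i)
    have h2 : (0:ℝ) ≤ ∑ i ∈ F, q (v i) := Finset.sum_nonneg fun i _ => hq0 _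
    have hαn : (1:ℝ) ≤ α ^ F.card := one_le_pow₀ hα
    have hα0 : (0:ℝ) < α := lt_of_lt_of_le one_pos hα
    calc q (v a + ∑ i ∈ F, v i) ≤ α * (q (v a) + q (∑ i ∈ F, v i)) := h1
    _ ≤ α * (q (v a) + α ^ F.card * ∑ i ∈ F, q (v i)) := by nlinarith [ih]
    _ ≤ α ^ (F.card + 1) * (q (v a) + ∑ i ∈ F, q (v i)) := by
        rw [pow_succ, mul_comm (α ^ F.card) α]
        nlinarith [mul_nonneg (le_of_lt hα0) (mul_nonneg (hq0 (v a)) (sub_nonneg.2 hαn)), h2]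

include hα hq0 hq00 hqa in
lemma qgeom (v : ℕ → X) (hv : ∀ j, q (v j) ≤ (2*α)⁻¹ ^ (j+1)) :
    ∀ (d a : ℕ), q (∑ j ∈ Finset.Ico a (a+d), v j) ≤ (2*α)⁻¹ ^ a := by
  have hα0 : (0:ℝ) < α := lt_of_lt_of_le one_pos hα
  have h2α : (0:ℝ) < 2*α := by linarith
  intro d
  induction d with
  | zero => intro a; simp [hq00]; positivity
  | succ d ih =>
    intro a
    have hab : a + (d+1) = (a+1) + d := by omega
    rw [hab]
    have hlt : a < (a+1) + d := by omega
    rw [Finset.sum_eq_sum_Ico_succ_bot hlt]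
    have h1 := hqa (v a) (∑ j ∈ Finset.Ico (a+1) ((a+1)+d), v j)
    have h3 := ih (a+1)
    have h4 := hv a
    calc q (v a + ∑ j ∈ Finset.Ico (a+1) ((a+1)+d), v j)
        ≤ α * (q (v a) + q (∑ j ∈ Finset.Ico (a+1) ((a+1)+d), v j)) := h1
    _ ≤ α * ((2*α)⁻¹ ^ (a+1) + (2*α)⁻¹ ^ (a+1)) := by nlinarith [hq0 (v a)]
    _ = (2*α) * (2*α)⁻¹ ^ (a+1) := by ring
    _ = (2*α)⁻¹ ^ a := by
        rw [pow_succ]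
        field_simp
end QN

lemma abs_forall_eps (d M : ℝ) (hM : 0 ≤ M) (h : ∀ ε : ℝ, 0 < ε → |d| ≤ M * ε) : d = 0 := by
  by_contra hd
  have hpos : 0 < |d| := abs_pos.2 hd
  have := h (|d| / (2*(M+1))) (by positivity)
  have : |d| ≤ M * (|d| / (2*(M+1))) := this
  rw [mul_div_assoc'] at this
  have h2 := (le_div_iff₀ (by positivity : (0:ℝ) < 2*(M+1))).1 this
  nlinarith [h2, hpos, hM]



set_option maxHeartbeats 1000000 in
/-- If for every `x` the `t`-greedy projections of cardinality in `n` of `x`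
are bounded (by a constant depending on `x`), then there are `m ∈ ℕ` and
`C₃ > 0` bounding uniformly these projections on finitely supported vectors
whose support lies beyond `m`. -/
theorem stmt_11 {X : Type*} [AddCommGroup X] [Module ℝ X]
    (q : X → ℝ) (α : ℝ) (hα : 1 ≤ α)
    (hq0 : ∀ x : X, 0 ≤ q x) (hqz : ∀ x : X, q x = 0 ↔ x = 0)
    (hqs : ∀ (a : ℝ) (x : X), q (a • x) = |a| * q x)
    (hqa : ∀ x y : X, q (x + y) ≤ α * (q x + q y))
    (hcomplete : ∀ u : ℕ → X,
      (∀ ε : ℝ, 0 < ε → ∃ N, ∀ p ≥ N, ∀ r ≥ N, q (u p - u r) ≤ ε) →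
      ∃ x : X, ∀ ε : ℝ, 0 < ε → ∃ N, ∀ p ≥ N, q (u p - x) ≤ ε)
    (e : ℕ → X) (f : ℕ → X →ₗ[ℝ] ℝ) (fn : ℕ → ℝ)
    (hfn0 : ∀ i, 0 ≤ fn i) (hfb : ∀ (i : ℕ) (x : X), |f i x| ≤ fn i * q x)
    (hbio : ∀ k i, f k (e i) = if k = i then 1 else 0)
    (c : ℝ) (hc : ∀ i, (1 + q (e i)) * (1 + fn i) ≤ c)
    (hdense : ∀ x : X, ∀ ε : ℝ, 0 < ε →
      ∃ y ∈ Submodule.span ℝ (Set.range e), q (x - y) ≤ ε)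
    (t : ℝ) (ht0 : 0 < t) (ht1 : t ≤ 1)
    (n : ℕ → ℕ) (hn : StrictMono n) (hnpos : ∀ k, 0 < n k)
    (hptw : ∀ x : X, ∃ C₄ : ℝ, 0 < C₄ ∧ ∀ A : Finset ℕ,
      qGreedySet f t x A → (∃ k, A.card = n k) → q (qproj e f A x) ≤ C₄) :
    ∃ (m : ℕ) (C₃ : ℝ), 0 < C₃ ∧
      ∀ x ∈ Submodule.span ℝ (Set.range e), (∀ i, f i x ≠ 0 → m < i) →
        ∀ A : Finset ℕ, qGreedySet f t x A → (∃ k, A.card = n k) →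
          q (qproj e f A x) ≤ C₃ * q x := by
  classical
  have hα0 : (0:ℝ) < α := lt_of_lt_of_le one_pos hα
  have hq00 : q 0 = 0 := by
    have := hqs 0 0; simpa using this
  have hqneg : ∀ v : X, q (-v) = q v := by
    intro v; have := hqs (-1) v; simpa using this
  have hc1 : (1:ℝ) ≤ c := le_trans (by nlinarith [hq0 (e 0), hfn0 0]) (hc 0)
  have hfnc : ∀ i, fn i ≤ c := fun i => by nlinarith [hc i, hq0 (e i), hfn0 i]
  have hqec : ∀ i, q (e i) ≤ c := fun i => by nlinarith [hc i, hq0 (e i), hfn0 i]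
  have hcoef : ∀ (i : ℕ) (x : X), |f i x| ≤ c * q x := fun i x =>
    le_trans (hfb i x) (by nlinarith [hq0 x, hfnc i, hfn0 i])
  -- projection bound
  have hprojbound : ∀ (B : Finset ℕ) (x : X),
      q (qproj e f B x) ≤ α ^ B.card * (B.card * (c ^ 2 * q x)) := by
    intro B x
    have h1 := qsum_le_s11 q α hα hq0 hq00 hqa B (fun i => f i x • e i)
    have h2 : ∑ i ∈ B, q (f i x • e i) ≤ B.card * (c ^ 2 * q x) := by
      calc ∑ i ∈ B, q (f i x • e i) ≤ ∑ i ∈ B, c ^ 2 * q x := by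
            apply Finset.sum_le_sum
            intro i _
            rw [hqs]
            have h3 := hcoef i x
            have h4 := hqec i
            have h5 := abs_nonneg (f i x)
            have h6 := hq0 (e i)
            have h7 := hq0 x
            nlinarith
      _ = B.card * (c ^ 2 * q x) := by rw [Finset.sum_const, nsmul_eq_mul]
    refine le_trans h1 ?_
    have : (0:ℝ) ≤ α ^ B.card := by positivity
    nlinarith [h2, this]
  -- canonical representation of span elements
  have hrepr : ∀ x ∈ Submodule.span ℝ (Set.range e), ∃ S : Finset ℕ,
      (∀ i, f i x ≠ 0 ↔ i ∈ S) ∧ x = ∑ i ∈ S, f i x • e i := by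
    intro x hx
    have key : ∃ F : Finset ℕ, (∀ i, i ∉ F → f i x = 0) ∧ x = ∑ i ∈ F, f i x • e i := by
      induction hx using Submodule.span_induction with
      | mem w hw =>
        obtain ⟨i0, rfl⟩ := hw
        refine ⟨{i0}, ?_, ?_⟩
        · intro i hi
          rw [hbio]
          simp only [Finset.mem_singleton] at hi
          simp [hi]
        · simp [hbio]
      | zero => exact ⟨∅, by simp, by simp⟩
      | add w₁ w₂ h₁ h₂ ih₁ ih₂ =>
        obtain ⟨F₁, hF₁, hr₁⟩ := ih₁
        obtain ⟨F₂, hF₂, hr₂⟩ := ih₂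
        refine ⟨F₁ ∪ F₂, ?_, ?_⟩
        · intro i hi
          rw [map_add, hF₁ i (fun h => hi (Finset.mem_union_left _ h)),
            hF₂ i (fun h => hi (Finset.mem_union_right _ h)), add_zero]
        · have e₁ : w₁ = ∑ i ∈ F₁ ∪ F₂, f i w₁ • e i := by
            conv_lhs => rw [hr₁]
            apply Finset.sum_subset Finset.subset_union_left
            intro i _ hi
            rw [hF₁ i hi, zero_smul]
          have e₂ : w₂ = ∑ i ∈ F₁ ∪ F₂, f i w₂ • e i := by
            conv_lhs => rw [hr₂]
            apply Finset.sum_subset Finset.subset_union_right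
            intro i _ hi
            rw [hF₂ i hi, zero_smul]
          calc w₁ + w₂ = (∑ i ∈ F₁ ∪ F₂, f i w₁ • e i) + ∑ i ∈ F₁ ∪ F₂, f i w₂ • e i := by
                rw [← e₁, ← e₂]
          _ = ∑ i ∈ F₁ ∪ F₂, f i (w₁ + w₂) • e i := by
                rw [← Finset.sum_add_distrib]
                apply Finset.sum_congr rfl
                intro i _
                rw [map_add, add_smul]
      | smul a w hw ih =>
        obtain ⟨F, hF, hr⟩ := ih
        refine ⟨F, ?_, ?_⟩
        · intro i hi
          rw [map_smul, hF i hi, smul_eq_mul, mul_zero]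
        · conv_lhs => rw [hr]
          rw [Finset.smul_sum]
          apply Finset.sum_congr rfl
          intro i _
          rw [map_smul, smul_smul, smul_eq_mul]
    obtain ⟨F, hF, hr⟩ := key
    refine ⟨F.filter (fun i => f i x ≠ 0), ?_, ?_⟩
    · intro i
      constructor
      · intro hi
        exact Finset.mem_filter.2 ⟨by_contra fun h => hi (hF i h), hi⟩
      · intro hi; exact (Finset.mem_filter.1 hi).2
    · have hsum := Finset.sum_filter_of_ne (s := F) (f := fun i => f i x • e i)
        (p := fun i => f i x ≠ 0) (fun i _ h h0 => h (by simp [h0]))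
      exact (hsum.trans hr.symm).symm
  by_contra hcon
  push_neg at hcon
  -- Key lemma: counterexamples with arbitrarily large k and nonzero coefficients on A
  have Klem : ∀ (m K0 : ℕ) (C : ℝ), 0 < C → ∃ (x : X) (S A : Finset ℕ) (k : ℕ),
      x ∈ Submodule.span ℝ (Set.range e) ∧ (∀ i, f i x ≠ 0 ↔ i ∈ S) ∧
      (x = ∑ i ∈ S, f i x • e i) ∧ (∀ i ∈ S, m < i) ∧ A ⊆ S ∧
      (∀ i ∈ A, ∀ l, l ∉ A → t * |f l x| ≤ |f i x|) ∧ A.card = n k ∧ K0 < k ∧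
      0 < q x ∧ C * q x ≤ q (qproj e f A x) := by
    intro m K0 C hC
    set D := max (max C 1) (α ^ (n K0) * (n K0 * c ^ 2)) + 1 with hD_def
    have hD1 : (1:ℝ) ≤ max (max C 1) (α ^ (n K0) * (n K0 * c ^ 2)) :=
      le_trans (le_max_right C 1) (le_max_left _ _)
    have hD : 0 < D := by rw [hD_def]; linarith
    obtain ⟨x, hxspan, hsupp, A, hgr, ⟨k, hAcard⟩, hlarge⟩ := hcon m D hD
    obtain ⟨S, hS, hxrep⟩ := hrepr x hxspan
    have hqx : 0 < q x := by
      rcases (hq0 x).lt_or_eq with h | h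
      · exact h
      · exfalso
        have hx0 : x = 0 := (hqz x).1 h.symm
        have : qproj e f A x = 0 := by
          unfold qproj
          apply Finset.sum_eq_zero
          intro i _
          rw [hx0, map_zero, zero_smul]
        rw [this, hq00] at hlarge
        nlinarith [hlarge, mul_nonneg hD.le (hq0 x)]
    have hAS : A ⊆ S := by
      intro i hi
      rw [← hS]
      intro h0
      have hall : ∀ l, l ∉ A → f l x = 0 := by
        intro l hl
        have h1 := hgr i hi l hl
        rw [h0, abs_zero] at h1
        have := abs_nonneg (f l x)
        have hlt : |f l x| ≤ 0 := by nlinarith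
        exact abs_eq_zero.1 (le_antisymm hlt (abs_nonneg _))
      have hSA : S ⊆ A := by
        intro l hl
        by_contra hlA
        exact ((hS l).2 hl) (hall l hlA)
      have hxproj : qproj e f A x = x := by
        unfold qproj
        conv_rhs => rw [hxrep]
        symm
        apply Finset.sum_subset hSA
        intro l _ hlS
        have h0 : f l x = 0 := by
          by_contra hne
          exact hlS ((hS l).1 hne)
        rw [h0, zero_smul]
      rw [hxproj] at hlarge
      nlinarith [hlarge, hqx, hD1]
    have hk : K0 < k := by
      by_contra hkK
      push_neg at hkK
      have h1 : q (qproj e f A x) ≤ α ^ (n K0) * (n K0 * (c ^ 2 * q x)) := by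
        refine le_trans (hprojbound A x) ?_
        rw [hAcard]
        have hnk : n k ≤ n K0 := hn.monotone hkK
        have h2 : (α:ℝ) ^ (n k) ≤ α ^ (n K0) := pow_le_pow_right₀ hα hnk
        have h3 : ((n k : ℝ)) ≤ (n K0 : ℝ) := by exact_mod_cast hnk
        have h4 : (0:ℝ) ≤ c ^ 2 * q x := by positivity
        have h5 : (0:ℝ) ≤ (n k : ℝ) := by positivity
        have h6 : (0:ℝ) < α ^ (n k) := by positivity
        nlinarith [mul_le_mul h2 (mul_le_mul_of_nonneg_right h3 h4) (by positivity) (by positivity)]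
      have hDge : α ^ (n K0) * (n K0 * c ^ 2) ≤ D - 1 := by
        rw [hD_def]; simp only [add_sub_cancel_right]
        exact le_max_right _ _
      nlinarith [hlarge, hqx, h1]
    refine ⟨x, S, A, k, hxspan, hS, hxrep, ?_, hAS, hgr, hAcard, hk, hqx, ?_⟩
    · intro i hi
      exact hsupp i ((hS i).2 hi)
    · have hCD : C ≤ D := by
        rw [hD_def]
        have := le_trans (le_max_left C 1) (le_max_left _ (α ^ (n K0) * (n K0 * c ^ 2)))
        linarith
      nlinarith [hlarge, hqx]
  -- smul commutes with qproj
  have hqprojsmul : ∀ (A : Finset ℕ) (lam : ℝ) (x : X),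
      qproj e f A (lam • x) = lam • qproj e f A x := by
    intro A lam x
    unfold qproj
    rw [Finset.smul_sum]
    apply Finset.sum_congr rfl
    intro i _
    rw [map_smul, smul_eq_mul, smul_smul]
  -- the recursive step
  have step : ∀ (m s : ℕ) (ρ : ℝ) (j : ℕ), ∃ (z : X) (S A : Finset ℕ) (k : ℕ) (ρ' : ℝ),
      0 < ρ → (z ∈ Submodule.span ℝ (Set.range e) ∧ (∀ i, f i z ≠ 0 ↔ i ∈ S) ∧
        (z = ∑ i ∈ S, f i z • e i) ∧ (∀ i ∈ S, m < i) ∧ A ⊆ S ∧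
        (A.card + s = n k) ∧ q z ≤ (2*α)⁻¹ ^ (j+1) ∧ (∀ i, t * |f i z| ≤ ρ) ∧
        (∀ i ∈ A, ∀ l, l ∉ A → t * |f l z| ≤ |f i z|) ∧ 0 < ρ' ∧ ρ' ≤ ρ ∧
        (∀ i ∈ S, ρ' ≤ |f i z|) ∧ α * (j+1) ≤ q (qproj e f A z)) := by
    intro m s ρ j
    by_cases hρ : 0 < ρ
    swap
    · exact ⟨0, ∅, ∅, 0, 0, fun h => absurd h hρ⟩
    have hc0 : (0:ℝ) < c := lt_of_lt_of_le one_pos hc1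
    set β : ℝ := min ((2*α)⁻¹ ^ (j+1)) (ρ / (t*c)) with hβ_def
    have hβ : 0 < β := by
      apply lt_min
      · positivity
      · positivity
    set Cs : ℝ := α * (α ^ s * (s * c ^ 2) + α * (j+1) / β + 1) with hCs_def
    have hCs : 0 < Cs := by
      have h1 : (0:ℝ) < α * (j+1) / β := by positivity
      have h2 : (0:ℝ) ≤ α ^ s * (s * c ^ 2) := by positivity
      nlinarith
    obtain ⟨x, S, A₀, k, hxspan, hS, hxrep, hsupp, hA₀S, hgr, hcard, hks, hqx, hratio⟩ :=
      Klem m s Cs hCs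
    have hkn : k ≤ n k := hn.le_apply
    have hsk : s < n k := by omega
    obtain ⟨A, hAA₀, hAcard, htop⟩ := top_subset (fun i => |f i x|) (n k - s) A₀
      (by rw [hcard]; omega)
    -- junk bound
    have hjunkcard : (A₀ \ A).card = s := by
      rw [card_sdiff_of_subset hAA₀, hAcard, hcard]; omega
    have hjunk : q (qproj e f (A₀ \ A) x) ≤ α ^ s * (s * (c ^ 2 * q x)) := by
      have := hprojbound (A₀ \ A) x
      rw [hjunkcard] at this
      exact this
    have hsplit : qproj e f A₀ x = qproj e f A x + qproj e f (A₀ \ A) x := by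
      unfold qproj
      rw [← Finset.sum_union (Finset.disjoint_sdiff)]
      rw [Finset.union_sdiff_of_subset hAA₀]
    have hwlow : Cs / α * q x - α ^ s * (s * (c ^ 2 * q x)) ≤ q (qproj e f A x) := by
      have h1 := hqa (qproj e f A x) (qproj e f (A₀ \ A) x)
      rw [← hsplit] at h1
      have h2 : Cs * q x ≤ α * (q (qproj e f A x) + q (qproj e f (A₀ \ A) x)) :=
        le_trans hratio h1
      have h3 : Cs / α * q x ≤ q (qproj e f A x) + q (qproj e f (A₀ \ A) x) := by
        rw [div_mul_eq_mul_div, div_le_iff₀ hα0]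
        nlinarith [h2]
      linarith [hjunk, h3]
    set lam : ℝ := β / q x with hlam_def
    have hlam : 0 < lam := by positivity
    have hlamq : lam * q x = β := div_mul_cancel₀ β (ne_of_gt hqx)
    -- minimum coefficient
    have hAne : A.Nonempty := by
      rw [← Finset.card_pos, hAcard]; omega
    have hSne : S.Nonempty := ⟨hAne.choose, hA₀S (hAA₀ hAne.choose_spec)⟩
    obtain ⟨i₀, hi₀S, hi₀min⟩ := Finset.exists_min_image S (fun i => |f i x|) hSne
    have hi₀pos : 0 < |f i₀ x| := abs_pos.2 ((hS i₀).2 hi₀S)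
    have hfz : ∀ i, f i (lam • x) = lam * f i x := by
      intro i; rw [map_smul, smul_eq_mul]
    have habsz : ∀ i, |f i (lam • x)| = lam * |f i x| := by
      intro i; rw [hfz, abs_mul, abs_of_pos hlam]
    refine ⟨lam • x, S, A, k, min ρ (lam * |f i₀ x|), fun _ => ?_⟩
    refine ⟨Submodule.smul_mem _ _ hxspan, ?_, ?_, hsupp, hAA₀.trans hA₀S, ?_, ?_, ?_, ?_, ?_, min_le_left _ _, ?_, ?_⟩
    · intro i
      rw [hfz]
      constructor
      · intro h
        exact (hS i).1 fun h0 => h (by rw [h0, mul_zero])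
      · intro h
        exact mul_ne_zero (ne_of_gt hlam) ((hS i).2 h)
    · conv_lhs => rw [hxrep]
      rw [Finset.smul_sum]
      apply Finset.sum_congr rfl
      intro i _
      rw [hfz, smul_smul]
    · rw [hAcard]; omega
    · rw [hqs, abs_of_pos hlam, hlamq]
      exact min_le_left _ _
    · intro i
      rw [habsz]
      have h1 : |f i x| ≤ c * q x := hcoef i x
      have h2 : lam * |f i x| ≤ lam * (c * q x) :=
        mul_le_mul_of_nonneg_left h1 hlam.le
      have h3 : t * (lam * (c * q x)) = t * c * β := by
        rw [mul_comm c (q x), ← mul_assoc lam (q x) c, hlamq]; ring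
      have h4 : β ≤ ρ / (t * c) := min_le_right _ _
      have h5 : t * c * β ≤ ρ := by
        rw [← le_div_iff₀' (by positivity : (0:ℝ) < t * c)]
        exact h4
      nlinarith [h2, h5, ht0]
    · intro i hi l hl
      rw [habsz, habsz]
      by_cases hlA₀ : l ∈ A₀
      · have hmem : l ∈ A₀ \ A := Finset.mem_sdiff.2 ⟨hlA₀, hl⟩
        have h1 := htop i hi l hmem
        have h2 := abs_nonneg (f l x)
        nlinarith [mul_le_mul_of_nonneg_left h1 hlam.le, mul_nonneg (mul_nonneg (sub_nonneg.2 ht1) hlam.le) h2]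
      · have h1 := hgr i (hAA₀ hi) l hlA₀
        nlinarith [mul_le_mul_of_nonneg_left h1 hlam.le]
    · exact lt_min hρ (by positivity)
    · intro i hiS
      rw [habsz]
      exact le_trans (min_le_right _ _) (mul_le_mul_of_nonneg_left (hi₀min i hiS) hlam.le)
    · rw [hqprojsmul, hqs, abs_of_pos hlam]
      have h1 : lam * (Cs / α * q x - α ^ s * (s * (c ^ 2 * q x))) ≤ lam * q (qproj e f A x) :=
        mul_le_mul_of_nonneg_left hwlow hlam.le
      refine le_trans ?_ h1
      have hexp : lam * (Cs / α * q x - α ^ s * (s * (c ^ 2 * q x)))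
          = (lam * q x) * (Cs / α - α ^ s * (s * c ^ 2)) := by ring
      rw [hexp, hlamq]
      have hCsdiv : Cs / α = α ^ s * (s * c ^ 2) + α * (j+1) / β + 1 := by
        rw [hCs_def, mul_div_cancel_left₀ _ (ne_of_gt hα0)]
      rw [hCsdiv]
      have : α ^ s * (s * c ^ 2) + α * (↑j+1) / β + 1 - α ^ s * (s * c ^ 2)
          = α * (↑j+1) / β + 1 := by ring
      rw [this]
      have hb : β * (α * (↑j+1) / β + 1) = α * (↑j+1) + β := by
        field_simp
      rw [hb]
      linarith [hβ]

  choose Z SS AA kk RR hstep using step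
  -- build the recursive sequence of blocks
  obtain ⟨Eb, rb, hE0, hr0, hEs, hrs, hz, hS, hA, hk⟩ :
      ∃ (Eb : ℕ → Finset ℕ) (rb : ℕ → ℝ),
        Eb 0 = ∅ ∧ rb 0 = 1 ∧
        (∀ j, Eb (j+1) = Eb j ∪ SS ((Eb j).sup id) (Eb j).card (rb j) j) ∧
        (∀ j, rb (j+1) = RR ((Eb j).sup id) (Eb j).card (rb j) j) ∧
        True ∧ True ∧ True ∧ True := by
    refine ⟨fun j => (Nat.rec (∅, (1:ℝ))
      (fun j p => (p.1 ∪ SS (p.1.sup id) p.1.card p.2 j, RR (p.1.sup id) p.1.card p.2 j))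
      j : Finset ℕ × ℝ).1,
      fun j => (Nat.rec (∅, (1:ℝ))
      (fun j p => (p.1 ∪ SS (p.1.sup id) p.1.card p.2 j, RR (p.1.sup id) p.1.card p.2 j))
      j : Finset ℕ × ℝ).2, rfl, rfl, fun j => rfl, fun j => rfl, trivial, trivial, trivial, trivial⟩
  clear hz hS hA hk
  obtain ⟨zz, Sb, Ab, kb, hz, hS, hA, hk⟩ :
      ∃ (zz : ℕ → X) (Sb Ab : ℕ → Finset ℕ) (kb : ℕ → ℕ),
        (∀ j, zz j = Z ((Eb j).sup id) (Eb j).card (rb j) j) ∧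
        (∀ j, Sb j = SS ((Eb j).sup id) (Eb j).card (rb j) j) ∧
        (∀ j, Ab j = AA ((Eb j).sup id) (Eb j).card (rb j) j) ∧
        (∀ j, kb j = kk ((Eb j).sup id) (Eb j).card (rb j) j) :=
    ⟨_, _, _, _, fun j => rfl, fun j => rfl, fun j => rfl, fun j => rfl⟩
  have hEs' : ∀ j, Eb (j+1) = Eb j ∪ Sb j := by
    intro j; rw [hEs j, ← hS j]
  have hrpos : ∀ j, 0 < rb j := by
    intro j
    induction j with
    | zero => rw [hr0]; exact one_pos
    | succ j ih =>
      rw [hrs j]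
      exact (hstep _ _ _ j ih).2.2.2.2.2.2.2.2.2.1
  have HH : ∀ j, zz j ∈ Submodule.span ℝ (Set.range e) ∧
      (∀ i, f i (zz j) ≠ 0 ↔ i ∈ Sb j) ∧
      (zz j = ∑ i ∈ Sb j, f i (zz j) • e i) ∧
      (∀ i ∈ Sb j, (Eb j).sup id < i) ∧ Ab j ⊆ Sb j ∧
      ((Ab j).card + (Eb j).card = n (kb j)) ∧
      q (zz j) ≤ (2*α)⁻¹ ^ (j+1) ∧ (∀ i, t * |f i (zz j)| ≤ rb j) ∧
      (∀ i ∈ Ab j, ∀ l, l ∉ Ab j → t * |f l (zz j)| ≤ |f i (zz j)|) ∧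
      0 < rb (j+1) ∧ rb (j+1) ≤ rb j ∧
      (∀ i ∈ Sb j, rb (j+1) ≤ |f i (zz j)|) ∧
      α * ((j:ℝ)+1) ≤ q (qproj e f (Ab j) (zz j)) := by
    intro j
    have H := hstep ((Eb j).sup id) (Eb j).card (rb j) j (hrpos j)
    rw [← hz j, ← hS j, ← hA j, ← hk j, ← hrs j] at H
    exact H
  have c2 := fun j => (HH j).2.1
  have c3 := fun j => (HH j).2.2.1
  have c4 := fun j => (HH j).2.2.2.1
  have c5 := fun j => (HH j).2.2.2.2.1
  have c6 := fun j => (HH j).2.2.2.2.2.1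
  have c7 := fun j => (HH j).2.2.2.2.2.2.1
  have c8 := fun j => (HH j).2.2.2.2.2.2.2.1
  have c9 := fun j => (HH j).2.2.2.2.2.2.2.2.1
  have c11 := fun j => (HH j).2.2.2.2.2.2.2.2.2.2.1
  have c12 := fun j => (HH j).2.2.2.2.2.2.2.2.2.2.2.1
  have c13 := fun j => (HH j).2.2.2.2.2.2.2.2.2.2.2.2
  -- global structure
  have hEstep : ∀ j, Eb j ⊆ Eb (j+1) := by
    intro j; rw [hEs' j]; exact Finset.subset_union_left
  have hEmono : ∀ i j, i ≤ j → Eb i ⊆ Eb j := by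
    intro i j h
    induction h with
    | refl => exact Finset.Subset.rfl
    | step hm ih => exact ih.trans (hEstep _)
  have hSsubE : ∀ j, Sb j ⊆ Eb (j+1) := by
    intro j; rw [hEs' j]; exact Finset.subset_union_right
  have hSfresh : ∀ j, ∀ i ∈ Sb j, i ∉ Eb j := by
    intro j i hi hiE
    have h4 := c4 j i hi
    have := Finset.le_sup (f := id) hiE
    simp only [id] at this
    omega
  have hSdisj : ∀ i j, i < j → ∀ l ∈ Sb i, l ∉ Sb j := by
    intro i j hij l hl hlj
    exact hSfresh j l hlj (hEmono (i+1) j hij (hSsubE i hl))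
  have hEdecomp : ∀ j, ∀ l ∈ Eb j, ∃ i, i < j ∧ l ∈ Sb i := by
    intro j
    induction j with
    | zero => rw [hE0]; intro l hl; exact absurd hl (Finset.notMem_empty l)
    | succ j ih =>
      intro l hl
      rw [hEs' j] at hl
      rcases Finset.mem_union.1 hl with h | h
      · obtain ⟨i, hi, hS'⟩ := ih l h
        exact ⟨i, by omega, hS'⟩
      · exact ⟨j, by omega, h⟩
  have hrmono : ∀ i j, i ≤ j → rb j ≤ rb i := by
    intro i j h
    induction h with
    | refl => exact le_refl _
    | step hm ih => exact le_trans (c11 _) ih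
  -- the limit vector
  obtain ⟨Yp, hYp⟩ : ∃ Y : ℕ → X, ∀ p, Y p = ∑ i ∈ Finset.range p, zz i :=
    ⟨_, fun p => rfl⟩
  have hzsmall : ∀ j, q (zz j) ≤ (2*α)⁻¹ ^ (j+1) := c7
  have hIco : ∀ r p, r ≤ p → q (∑ i ∈ Finset.Ico r p, zz i) ≤ (2*α)⁻¹ ^ r := by
    intro r p h
    have := qgeom q α hα hq0 hq00 hqa zz hzsmall (p - r) r
    rwa [Nat.add_sub_cancel' h] at this
  have hYdiff : ∀ p r, r ≤ p → Yp p - Yp r = ∑ i ∈ Finset.Ico r p, zz i := by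
    intro p r h
    rw [hYp p, hYp r]
    exact (Finset.sum_Ico_eq_sub _ h).symm
  have hCauchy : ∀ ε : ℝ, 0 < ε → ∃ N, ∀ p ≥ N, ∀ r ≥ N, q (Yp p - Yp r) ≤ ε := by
    intro ε hε
    obtain ⟨N, hN⟩ := exists_pow_lt_of_lt_one hε (by norm_num : (1:ℝ)/2 < 1)
    have hhalf : ((2*α):ℝ)⁻¹ ≤ 1/2 := by
      rw [inv_le_comm₀ (by linarith) (by norm_num)]
      linarith
    have key : ∀ p r, N ≤ r → r ≤ p → q (Yp p - Yp r) ≤ ε := by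
      intro p r hNr hrp
      rw [hYdiff p r hrp]
      refine le_trans (hIco r p hrp) (le_trans ?_ hN.le)
      calc ((2*α):ℝ)⁻¹ ^ r ≤ (1/2) ^ r := by
            apply pow_le_pow_left₀ (by positivity) hhalf
      _ ≤ (1/2) ^ N := by
            apply pow_le_pow_of_le_one (by norm_num) (by norm_num) hNr
    refine ⟨N, fun p hp r hr => ?_⟩
    rcases le_total r p with h | h
    · exact key p r hr h
    · rw [← hqneg (Yp p - Yp r), neg_sub]
      exact key r p hp h
  obtain ⟨y, hy⟩ := hcomplete Yp hCauchy
  -- coefficients of y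
  have hfY : ∀ l i p, i < p → l ∈ Sb i → f l (Yp p) = f l (zz i) := by
    intro l i p hip hl
    rw [hYp, map_sum]
    rw [Finset.sum_eq_single i]
    · intro b hb hbi
      by_contra hne
      have hlb : l ∈ Sb b := (c2 b l).1 hne
      rcases Nat.lt_or_ge b i with hlt | hge
      · exact hSdisj b i hlt l hlb hl
      · exact hSdisj i b (by omega) l hl hlb
    · intro hip'
      exact absurd (Finset.mem_range.2 hip) hip'
  have hfy : ∀ i, ∀ l ∈ Sb i, f l y = f l (zz i) := by
    intro i l hl
    have key : ∀ ε : ℝ, 0 < ε → |f l y - f l (zz i)| ≤ (fn l + 1) * ε := by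
      intro ε hε
      obtain ⟨N, hN⟩ := hy ε hε
      have h1 : q (Yp (max N (i+1)) - y) ≤ ε := hN _ (le_max_left _ _)
      have h2 : f l (Yp (max N (i+1))) = f l (zz i) := hfY l i _ (by omega) hl
      have h3 : |f l y - f l (zz i)| = |f l (Yp (max N (i+1)) - y)| := by
        rw [map_sub, ← h2, abs_sub_comm]
      rw [h3]
      refine le_trans (hfb l _) ?_
      nlinarith [hfn0 l, hε, h1, mul_le_mul_of_nonneg_left h1 (hfn0 l)]
    have := abs_forall_eps _ (fn l + 1) (by linarith [hfn0 l]) key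
    exact sub_eq_zero.1 this
  have hfy0 : ∀ l, (∀ i, l ∉ Sb i) → f l y = 0 := by
    intro l hno
    have key : ∀ ε : ℝ, 0 < ε → |f l y - 0| ≤ (fn l + 1) * ε := by
      intro ε hε
      obtain ⟨N, hN⟩ := hy ε hε
      have h1 : q (Yp N - y) ≤ ε := hN _ (le_refl N)
      have h2 : f l (Yp N) = 0 := by
        rw [hYp, map_sum]
        apply Finset.sum_eq_zero
        intro b _
        by_contra hne
        exact hno b ((c2 b l).1 hne)
      have h3 : |f l y - 0| = |f l (Yp N - y)| := by
        rw [sub_zero, map_sub, h2, zero_sub, abs_neg]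
      rw [h3]
      refine le_trans (hfb l _) ?_
      nlinarith [hfn0 l, hε, h1, mul_le_mul_of_nonneg_left h1 (hfn0 l)]
    have := abs_forall_eps _ (fn l + 1) (by linarith [hfn0 l]) key
    exact sub_eq_zero.1 this
  -- projections over Eb recover partial sums
  have hEbSbdisj : ∀ j, Disjoint (Eb j) (Sb j) :=
    fun j => Finset.disjoint_right.2 (fun l hlS => hSfresh j l hlS)
  have hEproj : ∀ j, ∑ i ∈ Eb j, f i y • e i = Yp j := by
    intro j
    induction j with
    | zero => rw [hE0, hYp]; simp
    | succ j ih =>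
      rw [hEs' j, Finset.sum_union (hEbSbdisj j), ih, hYp (j+1), Finset.sum_range_succ, ← hYp j]
      congr 1
      rw [c3 j]
      apply Finset.sum_congr rfl
      intro i hi
      rw [hfy j i hi]
  have hGdisj : ∀ j, Disjoint (Eb j) (Ab j) :=
    fun j => Finset.disjoint_right.2 (fun l hlA => hSfresh j l (c5 j hlA))
  have hGcard : ∀ j, (Eb j ∪ Ab j).card = n (kb j) := by
    intro j
    rw [Finset.card_union_of_disjoint (hGdisj j)]
    have := c6 j
    omega
  have hGreedy : ∀ j, qGreedySet f t y (Eb j ∪ Ab j) := by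
    intro j i hi l hl
    by_cases hl0 : f l y = 0
    · rw [hl0, abs_zero, mul_zero]; exact abs_nonneg _
    obtain ⟨jl, hlS⟩ : ∃ jl, l ∈ Sb jl := by
      by_contra hno; push_neg at hno; exact hl0 (hfy0 l hno)
    have hly : f l y = f l (zz jl) := hfy jl l hlS
    rcases lt_trichotomy jl j with hlt | heq | hgt
    · exact absurd (Finset.mem_union_left _ (hEmono (jl+1) j hlt (hSsubE jl hlS))) hl
    · subst heq
      have hlA : l ∉ Ab jl := fun h => hl (Finset.mem_union_right _ h)
      rcases Finset.mem_union.1 hi with hiE | hiA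
      · obtain ⟨i', hi'lt, hiS⟩ := hEdecomp jl i hiE
        have h1 : rb (i'+1) ≤ |f i y| := by
          rw [hfy i' i hiS]; exact c12 i' i hiS
        have h2 : t * |f l y| ≤ rb jl := by rw [hly]; exact c8 jl l
        exact le_trans (le_trans h2 (hrmono (i'+1) jl hi'lt)) h1
      · rw [hly, hfy jl i (c5 jl hiA)]
        exact c9 jl i hiA l hlA
    · have h2 : t * |f l y| ≤ rb jl := by rw [hly]; exact c8 jl l
      obtain ⟨ji, hjile, hiS⟩ : ∃ ji, ji ≤ j ∧ i ∈ Sb ji := by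
        rcases Finset.mem_union.1 hi with h | h
        · obtain ⟨i', hi', hS'⟩ := hEdecomp j i h
          exact ⟨i', le_of_lt hi', hS'⟩
        · exact ⟨j, le_refl j, c5 j h⟩
      have h1 : rb (ji+1) ≤ |f i y| := by
        rw [hfy ji i hiS]; exact c12 ji i hiS
      exact le_trans (le_trans h2 (hrmono (ji+1) jl (by omega))) h1
  have hfinal : ∀ j : ℕ, (j:ℝ) ≤ q (qproj e f (Eb j ∪ Ab j) y) := by
    intro j
    have hsplit2 : qproj e f (Eb j ∪ Ab j) y = Yp j + qproj e f (Ab j) (zz j) := by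
      unfold qproj
      rw [Finset.sum_union (hGdisj j), hEproj j]
      congr 1
      apply Finset.sum_congr rfl
      intro i hiA
      rw [hfy j i (c5 j hiA)]
    have h13 := c13 j
    have hYb : q (Yp j) ≤ 1 := by
      have h := hIco 0 j (Nat.zero_le j)
      rw [pow_zero] at h
      rw [hYp, Finset.range_eq_Ico]
      exact h
    have htri : q (qproj e f (Ab j) (zz j)) ≤
        α * (q (qproj e f (Eb j ∪ Ab j) y) + q (Yp j)) := by
      have heq2 : qproj e f (Ab j) (zz j) = qproj e f (Eb j ∪ Ab j) y + (- Yp j) := by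
        rw [hsplit2]; abel
      rw [heq2]
      refine le_trans (hqa _ _) ?_
      rw [hqneg]
    nlinarith [h13, htri, hYb, hα0, hq0 (qproj e f (Eb j ∪ Ab j) y)]
  obtain ⟨C₄, hC₄, hbound⟩ := hptw y
  obtain ⟨j, hj⟩ := exists_nat_gt C₄
  have hb := hbound (Eb j ∪ Ab j) (hGreedy j) ⟨kb j, hGcard j⟩
  linarith [hfinal j]
end
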